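/- arXiv:1709.08190 — 7 statements merged into one kernel-verified Lean document; each statement's English description precedes it below -/
import Mathlib

section
/- If α_1, …, α_n are real numbers with α_i ≥ 1 for all i, and the Beatty sequences S(α_i, β_i), i = 1, …, n, form a disjoint covering system of the integers, then ∑_{i=1}^n 1/α_i = 1. -/
/-- The Beatty sequence `S(α, β) = {⌊α n + β⌋ : n ∈ ℤ}`. -/
def beattySet (α β : ℝ) : Set ℤ :=
  {m : ℤ | ∃ n : ℤ, m = ⌊α * n + β⌋}

open Classical in
/-- Counting lemma: the number of elements of `S(a,b)` in `[0,N)` equals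
the number of integers in `[⌈-b/a⌉, ⌈(N-b)/a⌉)`. -/
lemma beatty_count (a b : ℝ) (ha : 1 ≤ a) (N : ℤ) :
    ((Finset.Ico (0:ℤ) N).filter (fun m => m ∈ beattySet a b)).card
      = (Finset.Ico (⌈-b / a⌉) (⌈((N:ℝ) - b) / a⌉)).card := by
  have hap : (0:ℝ) < a := lt_of_lt_of_le one_pos ha
  refine Eq.symm (Finset.card_bij (s := Finset.Ico ⌈-b / a⌉ ⌈((N:ℝ) - b) / a⌉)
    (t := (Finset.Ico (0:ℤ) N).filter (fun m => m ∈ beattySet a b))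
    (fun n _ => ⌊a * n + b⌋) ?_ ?_ ?_)
  · intro m hm
    simp only [Finset.mem_Ico, Int.ceil_le, Int.lt_ceil] at hm
    obtain ⟨h1, h2⟩ := hm
    rw [div_le_iff₀ hap] at h1
    rw [lt_div_iff₀ hap] at h2
    simp only [Finset.mem_filter, Finset.mem_Ico]
    refine ⟨⟨?_, ?_⟩, ⟨m, rfl⟩⟩
    · exact Int.le_floor.2 (by push_cast; nlinarith)
    · exact Int.floor_lt.2 (by push_cast; nlinarith)
  · -- injectivity, via strict monotonicity
    have hmono : StrictMono (fun m : ℤ => ⌊a * m + b⌋) := by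
      apply strictMono_int_of_lt_succ
      intro m
      have h1 : a * (m:ℝ) + b + 1 ≤ a * ((m:ℝ) + 1) + b := by nlinarith
      have h2 := Int.floor_le_floor h1
      rw [Int.floor_add_one] at h2
      push_cast
      omega
    intro m₁ h₁ m₂ h₂ he
    exact hmono.injective he
  · intro m hm
    simp only [Finset.mem_filter, Finset.mem_Ico] at hm
    obtain ⟨⟨h0, hN⟩, k, rfl⟩ := hm
    refine ⟨k, ?_, rfl⟩
    have hfl : (⌊a * (k:ℝ) + b⌋ : ℝ) ≤ a * k + b := Int.floor_le _
    have hfu : a * (k:ℝ) + b < ⌊a * (k:ℝ) + b⌋ + 1 := Int.lt_floor_add_one _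
    have h0' : (0:ℝ) ≤ a * k + b := le_trans (by exact_mod_cast h0) hfl
    have hN' : a * (k:ℝ) + b < N := by
      have h3 : (⌊a * (k:ℝ) + b⌋ : ℤ) + 1 ≤ N := hN
      have h4 : ((⌊a * (k:ℝ) + b⌋ : ℤ) : ℝ) + 1 ≤ (N:ℝ) := by exact_mod_cast h3
      linarith
    simp only [Finset.mem_Ico, Int.ceil_le, Int.lt_ceil]
    constructor
    · rw [div_le_iff₀ hap]; nlinarith
    · rw [lt_div_iff₀ hap]; nlinarith

/-- If Beatty sequences `S(αᵢ, βᵢ)`, `i = 1, …, n`, with all `αᵢ ≥ 1`, form a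
disjoint covering system of the integers (every integer belongs to exactly one
of them), then the reciprocals of the moduli sum to `1`. -/
theorem sum_reciprocals_eq_one (n : ℕ) (α β : Fin n → ℝ)
    (hα : ∀ i, 1 ≤ α i)
    (hcov : ∀ m : ℤ, ∃! i : Fin n, m ∈ beattySet (α i) (β i)) :
    ∑ i, 1 / α i = 1 := by
  classical
  have hαpos : ∀ i, (0:ℝ) < α i := fun i => lt_of_lt_of_le one_pos (hα i)
  set A : Fin n → ℤ := fun i => ⌈-β i / α i⌉ with hAdef
  set B : ℤ → Fin n → ℤ := fun N i => ⌈((N:ℝ) - β i) / α i⌉ with hBdef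
  -- partition the interval [0,N) by the covering system
  have hpart : ∀ N : ℤ, (Finset.Ico (0:ℤ) N).card
      = ∑ i : Fin n, ((Finset.Ico (0:ℤ) N).filter
        (fun m => m ∈ beattySet (α i) (β i))).card := by
    intro N
    have h := Finset.card_eq_sum_card_fiberwise
      (f := fun m : ℤ => (hcov m).exists.choose) (s := Finset.Ico (0:ℤ) N)
      (t := Finset.univ) (fun m _ => Finset.mem_univ _)
    rw [h]
    refine Finset.sum_congr rfl fun i _ => ?_
    congr 1
    apply Finset.filter_congr
    intro m _
    constructor
    · rintro rfl; exact (hcov m).exists.choose_spec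
    · intro hmi
      exact ((hcov m).unique (hcov m).exists.choose_spec hmi)
  -- the key identity
  have hkey : ∀ N : ℤ, 0 ≤ N → (N:ℤ) = ∑ i : Fin n, (B N i - A i) := by
    intro N hN
    have hAB : ∀ i : Fin n, A i ≤ B N i := by
      intro i
      apply Int.ceil_le_ceil
      have hNr : (0:ℝ) ≤ (N:ℝ) := by exact_mod_cast hN
      exact (div_le_div_iff_of_pos_right (hαpos i)).2 (by linarith)
    have h1 : N.toNat = ∑ i : Fin n, (B N i - A i).toNat := by
      have h := hpart N
      rw [Int.card_Ico] at h
      simp only [sub_zero] at h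
      rw [h]
      refine Finset.sum_congr rfl fun i _ => ?_
      rw [beatty_count (α i) (β i) (hα i) N, Int.card_Ico]
    calc (N:ℤ) = ((N.toNat : ℕ) : ℤ) := (Int.toNat_of_nonneg hN).symm
      _ = ((∑ i : Fin n, (B N i - A i).toNat : ℕ) : ℤ) := by exact_mod_cast h1
      _ = ∑ i : Fin n, ((B N i - A i).toNat : ℤ) := by push_cast; rfl
      _ = ∑ i : Fin n, (B N i - A i) :=
          Finset.sum_congr rfl fun i _ => Int.toNat_of_nonneg (sub_nonneg.2 (hAB i))
  -- pass to the reals and estimate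
  set s : ℝ := ∑ i : Fin n, 1 / α i with hs
  set D : ℝ := ∑ i : Fin n, (|β i| + 1 + |(A i : ℝ)|) with hD
  have hD0 : 0 ≤ D := Finset.sum_nonneg fun i _ => by positivity
  have hbound : ∀ N : ℕ, |s * N - N| ≤ D := by
    intro N
    have hk := hkey N (Int.ofNat_nonneg N)
    have hkr : (N:ℝ) = ∑ i : Fin n, ((B (N:ℤ) i : ℝ) - (A i : ℝ)) := by
      exact_mod_cast hk
    have h2 : s * (N:ℝ) = ∑ i : Fin n, (N:ℝ) / α i := by
      rw [hs, Finset.sum_mul]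
      exact Finset.sum_congr rfl fun i _ => by ring
    have hsplit : s * (N:ℝ) - (N:ℝ)
        = ∑ i : Fin n, ((N:ℝ) / α i - ((B (N:ℤ) i : ℝ) - (A i : ℝ))) := by
      rw [Finset.sum_sub_distrib, ← hkr, h2]
    rw [hsplit]
    refine le_trans (Finset.abs_sum_le_sum_abs _ _) (Finset.sum_le_sum fun i _ => ?_)
    have hBl : ((N:ℝ) - β i) / α i ≤ (B (N:ℤ) i : ℝ) := Int.le_ceil _
    have hBu : (B (N:ℤ) i : ℝ) < ((N:ℝ) - β i) / α i + 1 := Int.ceil_lt_add_one _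
    have hai := hα i
    have hap := hαpos i
    have hdiv : ((N:ℝ) - β i) / α i = (N:ℝ)/α i - β i / α i := by ring
    have hβ : |β i / α i| ≤ |β i| := by
      rw [abs_div, abs_of_pos hap]
      calc |β i| / α i ≤ |β i| / 1 :=
            div_le_div_of_nonneg_left (abs_nonneg _) one_pos hai
        _ = |β i| := div_one _
    have hβ' := abs_le.1 hβ
    rw [hdiv] at hBl hBu
    have h1 : |(N:ℝ) / α i - (B (N:ℤ) i : ℝ)| ≤ |β i| + 1 := by
      rw [abs_le]; constructor <;> [linarith; linarith]
    have hre : (N:ℝ) / α i - ((B (N:ℤ) i : ℝ) - (A i : ℝ))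
        = ((N:ℝ) / α i - (B (N:ℤ) i : ℝ)) + (A i : ℝ) := by ring
    rw [hre]
    calc |((N:ℝ) / α i - (B (N:ℤ) i : ℝ)) + (A i : ℝ)|
        ≤ |(N:ℝ) / α i - (B (N:ℤ) i : ℝ)| + |(A i : ℝ)| := abs_add_le _ _
      _ ≤ |β i| + 1 + |(A i : ℝ)| := by linarith
  -- conclude
  by_contra hne
  have hε : 0 < |s - 1| := abs_pos.2 (sub_ne_zero.2 hne)
  obtain ⟨N, hNgt⟩ := exists_nat_gt (D / |s - 1|)
  have hN1 : (0:ℝ) < N := lt_of_le_of_lt (div_nonneg hD0 hε.le) hNgt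
  have h1 : |s - 1| * N ≤ D := by
    have hb := hbound N
    calc |s - 1| * N = |(s - 1) * N| := by rw [abs_mul, abs_of_pos hN1]
      _ = |s * N - N| := by rw [sub_mul, one_mul]
      _ ≤ D := hb
  have h2 : D < |s - 1| * N := by
    rw [div_lt_iff₀ hε] at hNgt
    linarith
  linarith
end

section
/- For every positive integer n, the n rational Beatty sequences S((2^n − 1)/2^{n−i}, −2^{i−1} + 1), for i = 1, 2, …, n, form a disjoint covering system of the integers, and their moduli (2^n − 1)/2^{n−i} are pairwise distinct. -/
/-!
Clearing denominators, `m` lies in the `i`-th sequence iff `2ⁿ - 1` divides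
`2^(n-1-i) * (m + 2^i - 1) + r` for some `0 ≤ r < 2^(n-1-i)`. As `2^(i+1)` inverts `2^(n-1-i)`
modulo `2ⁿ - 1`, this says `1 - m ≡ 2^i * (2r + 1)`. The numbers `2^i * (2r + 1)` with `i < n`
and `r < 2^(n-1-i)` are exactly `1, …, 2ⁿ - 1`, a complete residue system modulo `2ⁿ - 1`, and
each determines its `i` as its 2-adic valuation.
-/

theorem mem_beattySet_div_natCast_iff {a b : ℤ} {q : ℕ} (hq : 0 < q) (m : ℤ) :
    m ∈ beattySet (a / q) (b / q) ↔ ∃ r : ℕ, r < q ∧ a ∣ q * m - b + r := by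
  have hq' : (0 : ℤ) < q := by exact_mod_cast hq
  have hfloor (k : ℤ) : ⌊(a / q : ℝ) * k + b / q⌋ = (a * k + b) / q := by
    rw [← Int.floor_intCast (R := ℝ) (a * k + b), ← Int.floor_div_natCast]
    push_cast
    ring_nf
  simp only [beattySet, Set.mem_ofPred_eq, hfloor]
  constructor
  · rintro ⟨k, rfl⟩
    have hr := Int.emod_nonneg (a * k + b) hq'.ne'
    refine ⟨((a * k + b) % q).toNat, by have := Int.emod_lt_of_pos (a * k + b) hq'; omega, k, ?_⟩
    have := Int.emod_add_mul_ediv (a * k + b) q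
    rw [Int.toNat_of_nonneg hr]
    linarith
  · rintro ⟨r, hr, k, hk⟩
    exact ⟨k, ((Int.ediv_emod_unique (r := r) hq').mpr ⟨by linarith, by omega, by omega⟩).1.symm⟩

theorem dvd_mul_add_iff_dvd_add_mul {p q u x r : ℤ} (h : p ∣ u * q - 1) :
    p ∣ q * x + r ↔ p ∣ x + u * r := by
  constructor
  · intro hd
    have e : x + u * r = u * (q * x + r) - (u * q - 1) * x := by ring
    rw [e]
    exact dvd_sub (dvd_mul_of_dvd_right hd u) (dvd_mul_of_dvd_left h x)
  · intro hd
    have e : q * x + r = q * (x + u * r) - (u * q - 1) * r := by ring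
    rw [e]
    exact dvd_sub (dvd_mul_of_dvd_right hd q) (dvd_mul_of_dvd_left h r)

theorem two_pow_mul_odd_lt_two_pow_iff {i n r : ℕ} :
    2 ^ i * (2 * r + 1) < 2 ^ n ↔ i < n ∧ r < 2 ^ (n - 1 - i) := by
  constructor
  · intro h
    have hi : i < n := by
      rw [← Nat.pow_lt_pow_iff_right (by norm_num : 1 < 2)]
      exact lt_of_le_of_lt (Nat.le_mul_of_pos_right _ (by omega)) h
    refine ⟨hi, ?_⟩
    rw [show n = i + 1 + (n - 1 - i) by omega, pow_add, pow_succ, mul_assoc] at h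
    have := Nat.lt_of_mul_lt_mul_left h
    omega
  · rintro ⟨hi, hr⟩
    rw [show n = i + 1 + (n - 1 - i) by omega, pow_add, pow_succ, mul_assoc]
    exact Nat.mul_lt_mul_of_pos_left (by omega) (by positivity)

theorem padicValNat_two_pow_mul_odd (i r : ℕ) : padicValNat 2 (2 ^ i * (2 * r + 1)) = i := by
  rw [padicValNat.mul (by positivity) (by omega), padicValNat.prime_pow,
    padicValNat.eq_zero_of_not_dvd (by omega), add_zero]

theorem Int.exists_mem_Ioc_dvd_add {p : ℤ} (hp : 0 < p) (x : ℤ) :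
    ∃ t : ℕ, (t : ℤ) ∈ Set.Ioc 0 p ∧ p ∣ x + t := by
  have h0 := Int.emod_nonneg x hp.ne'
  have hlt := Int.emod_lt_of_pos x hp
  refine ⟨(p - x % p).toNat, by simp only [Set.mem_Ioc]; omega, x / p + 1, ?_⟩
  have := Int.emod_add_mul_ediv x p
  rw [Int.toNat_of_nonneg (by omega)]
  linarith

theorem Int.eq_of_mem_Ioc_of_dvd_add {p x t t' : ℤ} (ht : t ∈ Set.Ioc 0 p) (ht' : t' ∈ Set.Ioc 0 p)
    (h : p ∣ x + t) (h' : p ∣ x + t') : t = t' := by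
  have hd : p ∣ t - t' := by simpa using dvd_sub h h'
  simp only [Set.mem_Ioc] at ht ht'
  have := Int.eq_zero_of_abs_lt_dvd hd (by rw [abs_lt]; omega)
  omega

theorem mem_beattySet_fraenkel_iff {n i : ℕ} (hi : i < n) (m : ℤ) :
    m ∈ beattySet ((2 ^ n - 1 : ℝ) / (2 ^ (n - 1 - i) : ℝ)) (-(2 ^ i : ℝ) + 1) ↔
      ∃ r : ℕ, 2 ^ i * (2 * r + 1) < 2 ^ n ∧ (2 ^ n - 1 : ℤ) ∣ m - 1 + 2 ^ i * (2 * r + 1) := by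
  have hα : (2 ^ n - 1 : ℝ) / (2 ^ (n - 1 - i) : ℝ) =
      ((2 ^ n - 1 : ℤ) : ℝ) / ((2 ^ (n - 1 - i) : ℕ) : ℝ) := by push_cast; rfl
  have hβ : -(2 ^ i : ℝ) + 1 =
      ((2 ^ (n - 1 - i) * (1 - 2 ^ i) : ℤ) : ℝ) / ((2 ^ (n - 1 - i) : ℕ) : ℝ) := by
    push_cast; field_simp; ring
  have hinv : (2 ^ n - 1 : ℤ) ∣ 2 ^ (i + 1) * 2 ^ (n - 1 - i) - 1 := by
    rw [← pow_add, show i + 1 + (n - 1 - i) = n by omega]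
  rw [hα, hβ, mem_beattySet_div_natCast_iff (by positivity)]
  simp only [two_pow_mul_odd_lt_two_pow_iff, hi, true_and]
  refine exists_congr fun r => and_congr_right fun _ => ?_
  push_cast
  rw [show (2 : ℤ) ^ (n - 1 - i) * m - 2 ^ (n - 1 - i) * (1 - 2 ^ i) + r
      = 2 ^ (n - 1 - i) * (m + 2 ^ i - 1) + r by ring, dvd_mul_add_iff_dvd_add_mul hinv]
  ring_nf

theorem injective_two_pow_sub_one_div_two_pow {n : ℕ} (hn : 0 < n) :
    Function.Injective (fun i : Fin n => ((2 ^ n - 1 : ℝ) / (2 ^ (n - 1 - (i : ℕ)) : ℝ))) := by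
  intro i j h
  have hne : (2 : ℝ) ^ n - 1 ≠ 0 := by
    have : (2 : ℝ) ≤ 2 ^ n := by simpa using pow_le_pow_right₀ (by norm_num : (1 : ℝ) ≤ 2) hn
    linarith
  rw [div_eq_div_iff (by positivity) (by positivity)] at h
  have := pow_right_injective₀ (by norm_num : (0 : ℝ) < 2) (by norm_num) (mul_left_cancel₀ hne h)
  omega

/-- For every positive integer `n`, the `n` rational Beatty sequences
`S((2ⁿ − 1)/2^{n−i}, −2^{i−1} + 1)` for `i = 1, …, n` (indexed below by
`i : Fin n`, corresponding to the paper's index `i + 1`) form a disjoint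
covering system of the integers, and their moduli are pairwise distinct. -/
theorem fraenkel_system (n : ℕ) (hn : 0 < n) :
    (∀ m : ℤ, ∃! i : Fin n,
      m ∈ beattySet ((2 ^ n - 1 : ℝ) / (2 ^ (n - 1 - (i : ℕ)) : ℝ))
        (-(2 ^ (i : ℕ) : ℝ) + 1)) ∧
    Function.Injective
      (fun i : Fin n => ((2 ^ n - 1 : ℝ) / (2 ^ (n - 1 - (i : ℕ)) : ℝ))) := by
  refine ⟨fun m => ?_, injective_two_pow_sub_one_div_two_pow hn⟩
  have hp : (0 : ℤ) < 2 ^ n - 1 := by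
    have : (1 : ℤ) < 2 ^ n := by exact_mod_cast Nat.one_lt_two_pow hn.ne'
    linarith
  obtain ⟨t, ht, hdvd⟩ := Int.exists_mem_Ioc_dvd_add hp (m - 1)
  obtain ⟨i, _, ⟨r, rfl⟩, rfl⟩ := Nat.exists_eq_two_pow_mul_odd (Int.natCast_pos.mp ht.1).ne'
  have hlt : 2 ^ i * (2 * r + 1) < 2 ^ n := by exact_mod_cast Int.le_sub_one_iff.mp ht.2
  have hi := (two_pow_mul_odd_lt_two_pow_iff.mp hlt).1
  refine ⟨⟨i, hi⟩, (mem_beattySet_fraenkel_iff hi m).mpr ⟨r, hlt, by exact_mod_cast hdvd⟩, ?_⟩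
  intro j hj
  obtain ⟨s, hs, hsdvd⟩ := (mem_beattySet_fraenkel_iff j.isLt m).mp hj
  have heq : 2 ^ (j : ℕ) * (2 * s + 1) = 2 ^ i * (2 * r + 1) := by
    have := Int.eq_of_mem_Ioc_of_dvd_add (t := ((2 ^ (j : ℕ) * (2 * s + 1) : ℕ) : ℤ))
      ⟨by positivity, Int.le_sub_one_iff.mpr (by exact_mod_cast hs)⟩ ht
      (by exact_mod_cast hsdvd) hdvd
    exact_mod_cast this
  ext
  simpa only [padicValNat_two_pow_mul_odd] using congrArg (padicValNat 2) heq
end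

section
/- Let p, q1, q2 be positive integers with q1, q2 ≥ 1 and q1 + q2 ≤ p, let q̃_2 be an integer with 1 ≤ q̃_2 ≤ p − 1, and let b̃_2 be a residue modulo p. Set B_1 = {0, 1, …, q1 − 1} and B_2 = {(b̃_2 + j·q̃_2) mod p : j = 0, 1, …, q2 − 1}, regarded as subsets of ℤ/pℤ, and suppose B_1 and B_2 are disjoint. If B_1 ∩ (B_1 + q̃_2) ≠ ∅ (where B_1 + q̃_2 = {b + q̃_2 mod p : b ∈ B_1}), then the representatives of B_2 in {0, …, p−1} all lie in the interval [q1, p−1] and form an arithmetic progression whose common difference is q̃_2 or p − q̃_2. -/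
/-- Lemma (Ofir): let `B₁ = {0, …, q₁−1}` and
`B₂ = {(b̃₂ + j q̃₂) mod p : 0 ≤ j < q₂}` be disjoint sets of residues modulo
`p` (identified with their least nonnegative representatives), where
`q₁ + q₂ ≤ p` and `1 ≤ q̃₂ ≤ p − 1`.  If `B₁ ∩ (B₁ + q̃₂) ≠ ∅`, then all
elements of `B₂` lie in the interval `[q₁, p−1]` and `B₂` is an arithmetic
progression whose common difference is `q̃₂` or `p − q̃₂`. -/
theorem lemma_ofir (p q1 q2 qt2 bt2 : ℕ) (hp : 0 < p)
    (hq1 : 0 < q1) (hq2 : 0 < q2) (hsum : q1 + q2 ≤ p)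
    (hqt2 : 1 ≤ qt2) (hqt2' : qt2 ≤ p - 1) (hbt2 : bt2 < p)
    (B1 B2 : Finset ℕ)
    (hB1 : B1 = Finset.range q1)
    (hB2 : B2 = (Finset.range q2).image (fun j => (bt2 + j * qt2) % p))
    (hdisj : Disjoint B1 B2)
    (hmeet : (B1 ∩ B1.image (fun b => (b + qt2) % p)).Nonempty) :
    (∀ x ∈ B2, q1 ≤ x ∧ x ≤ p - 1) ∧
    ∃ c a0, (c = qt2 ∨ c = p - qt2) ∧
      B2 = (Finset.range q2).image (fun j => a0 + j * c) := by
  subst hB1 hB2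
  have hp1 : qt2 < p := by omega
  have hmem : ∀ x ∈ (Finset.range q2).image (fun j => (bt2 + j * qt2) % p),
      q1 ≤ x ∧ x ≤ p - 1 := by
    intro x hx
    have hxp : x < p := by
      simp only [Finset.mem_image, Finset.mem_range] at hx
      obtain ⟨j, hj, rfl⟩ := hx
      exact Nat.mod_lt _ hp
    have hxq : q1 ≤ x := by
      by_contra h
      have hxb : x ∈ Finset.range q1 := Finset.mem_range.mpr (by omega)
      exact (Finset.disjoint_left.mp hdisj hxb) hx
    omega
  have hge : ∀ j, j < q2 → q1 ≤ (bt2 + j * qt2) % p := by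
    intro j hj
    exact (hmem _ (Finset.mem_image.mpr ⟨j, Finset.mem_range.mpr hj, rfl⟩)).1
  obtain ⟨b, hb⟩ := hmeet
  simp only [Finset.mem_inter, Finset.mem_image, Finset.mem_range] at hb
  obtain ⟨hb1, b', hb', hbb⟩ := hb
  have hcase : qt2 < q1 ∨ p - qt2 < q1 := by
    rcases Nat.lt_or_ge (b' + qt2) p with h | h
    · left; rw [Nat.mod_eq_of_lt h] at hbb; omega
    · right
      have hq : (b' + qt2) % p = b' + qt2 - p := by
        rw [Nat.mod_eq_sub_mod h, Nat.mod_eq_of_lt (by omega)]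
      omega
  rcases hcase with hc | hc
  · -- common difference qt2, no wraparound
    have key : ∀ j, j < q2 → bt2 + j * qt2 < p ∧ (bt2 + j * qt2) % p = bt2 + j * qt2 := by
      intro j
      induction j with
      | zero => intro _; simpa using ⟨hbt2, Nat.mod_eq_of_lt (by simpa using hbt2)⟩
      | succ j ih =>
        intro hj
        obtain ⟨h1, _⟩ := ih (by omega)
        have e : (j + 1) * qt2 = j * qt2 + qt2 := by ring
        rcases Nat.lt_or_ge (bt2 + (j + 1) * qt2) p with h | h
        · exact ⟨h, Nat.mod_eq_of_lt h⟩
        · exfalso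
          have hm : (bt2 + (j + 1) * qt2) % p = bt2 + (j + 1) * qt2 - p := by
            rw [Nat.mod_eq_sub_mod h, Nat.mod_eq_of_lt (by omega)]
          have hg := hge (j + 1) hj
          omega
    refine ⟨hmem, qt2, bt2, Or.inl rfl, ?_⟩
    apply Finset.image_congr
    intro j hj
    simp only [Finset.coe_range, Set.mem_Iio] at hj
    exact (key j hj).2
  · -- common difference p - qt2, decreasing progression
    have key : ∀ j, j < q2 → (bt2 + j * qt2) % p + j * (p - qt2) = bt2 := by
      intro j
      induction j with
      | zero => intro _; simpa using Nat.mod_eq_of_lt hbt2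
      | succ j ih =>
        intro hj
        have h2 := ih (by omega)
        have hg := hge j (by omega)
        have ha : (bt2 + j * qt2) % p < p := Nat.mod_lt _ hp
        have step : (bt2 + (j + 1) * qt2) % p = ((bt2 + j * qt2) % p + qt2) % p := by
          have e : bt2 + (j + 1) * qt2 = (bt2 + j * qt2) + qt2 := by ring
          rw [e, Nat.add_mod, Nat.mod_eq_of_lt hp1]
        have h3 : ((bt2 + j * qt2) % p + qt2) % p = (bt2 + j * qt2) % p + qt2 - p := by
          rw [Nat.mod_eq_sub_mod (by omega), Nat.mod_eq_of_lt (by omega)]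
        have e2 : (j + 1) * (p - qt2) = j * (p - qt2) + (p - qt2) := by ring
        omega
    refine ⟨hmem, p - qt2, bt2 - (q2 - 1) * (p - qt2), Or.inr rfl, ?_⟩
    ext x
    simp only [Finset.mem_image, Finset.mem_range]
    constructor
    · rintro ⟨j, hj, rfl⟩
      refine ⟨q2 - 1 - j, by omega, ?_⟩
      have h1 := key j hj
      have h2 := key (q2 - 1) (by omega)
      have e : (q2 - 1 - j) * (p - qt2) + j * (p - qt2) = (q2 - 1) * (p - qt2) := by
        rw [← Nat.add_mul]; congr 1; omega
      omega
    · rintro ⟨i, hi, rfl⟩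
      refine ⟨q2 - 1 - i, by omega, ?_⟩
      have h1 := key (q2 - 1 - i) (by omega)
      have h2 := key (q2 - 1) (by omega)
      have e : i * (p - qt2) + (q2 - 1 - i) * (p - qt2) = (q2 - 1) * (p - qt2) := by
        rw [← Nat.add_mul]; congr 1; omega
      omega
end

section
/- Let p be a positive integer, d a residue with gcd(p, d) = 1, a any residue, and q a positive integer with q < p. If the TG-sequence with points {(a + id) mod p : i = 0, …, q−1} has exactly one gap size (i.e., all of its gaps have the same size), then q = 1. -/
/-- For a set `B` of residues in `{0, …, p−1}` and a point `x`, the size of the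
(cyclic) gap from `x` to the next point of `B` modulo `p`: the least `t > 0`
with `(x + t) mod p ∈ B`.  For `x ∈ B` this recovers the differences
`a_{i+1} − a_i` of the sorted points, together with the wrap-around gap
`p + a_1 − a_q`. -/
noncomputable def gapAt (p : ℕ) (B : Finset ℕ) (x : ℕ) : ℕ :=
  sInf {t : ℕ | 0 < t ∧ (x + t) % p ∈ B}

/-- The set of gap sizes of `B` as a subset of residues modulo `p`. -/
noncomputable def gapSizes (p : ℕ) (B : Finset ℕ) : Finset ℕ :=
  B.image (gapAt p B)

/-!
If every gap of `B` has the same size `g`, then `B`, viewed in `ZMod p`, is closed under adding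
`g`, hence under adding every element of the subgroup generated by `g`, which contains
`c = gcd g p`. Since `c ≤ g`, shifting any `y ∈ B` back towards `a` by multiples of `c` lands in
the first gap after `a` unless `c ∣ y - a`. Applied to `y = a + d` this gives `c ∣ gcd p d = 1`,
so `B` is closed under adding `1` and is all of `ZMod p`, contradicting `|B| ≤ q < p`.
-/

namespace ZMod

variable {p : ℕ}

theorem val_add_natCast [NeZero p] (z : ZMod p) (n : ℕ) : (z + n).val = (z.val + n) % p := by
  rw [val_add, val_natCast, Nat.add_mod_mod]

theorem natCast_gcd_mem_zmultiples (g p : ℕ) :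
    ((g.gcd p : ℕ) : ZMod p) ∈ AddSubgroup.zmultiples (g : ZMod p) := by
  refine ⟨Nat.gcdA g p, ?_⟩
  have h := congrArg (Int.cast : ℤ → ZMod p) (Nat.gcd_eq_gcd_ab g p)
  push_cast at h
  rw [h, natCast_self, zero_mul, add_zero]
  exact (zsmul_eq_mul _ _).trans (mul_comm _ _)

variable [NeZero p] {S : Set (ZMod p)} {g : ℕ}

theorem add_mem_of_mem_zmultiples (hS : ∀ x ∈ S, x + g ∈ S) {x z : ZMod p} (hx : x ∈ S)
    (hz : z ∈ AddSubgroup.zmultiples (g : ZMod p)) : x + z ∈ S := by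
  have hnat : ∀ n : ℕ, x + n * g ∈ S := by
    intro n
    induction n with
    | zero => simpa using hx
    | succ n ih => simpa [add_mul, ← add_assoc] using hS _ ih
  obtain ⟨k, rfl⟩ := hz
  simpa [zsmul_eq_mul, natCast_zmod_val] using hnat (k : ZMod p).val

theorem gcd_dvd_val_sub_of_gap (hg : 0 < g) (hS : ∀ x ∈ S, x + g ∈ S) {a y : ZMod p}
    (hgap : ∀ t : ℕ, 0 < t → t < g → a + t ∉ S) (hy : y ∈ S) :
    g.gcd p ∣ (y - a).val := by
  set c := g.gcd p
  set v := (y - a).val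
  have hc : 0 < c := Nat.gcd_pos_of_pos_left p hg
  have hshift : a + (v % c : ℕ) = y + -((v / c) • (c : ZMod p)) := by
    have hv : (v : ZMod p) = y - a := natCast_zmod_val _
    have hdiv := congrArg (Nat.cast : ℕ → ZMod p) (Nat.div_add_mod v c)
    push_cast at hdiv
    rw [nsmul_eq_mul]
    linear_combination hdiv + hv
  have hmem : a + (v % c : ℕ) ∈ S := hshift ▸ add_mem_of_mem_zmultiples hS hy
    (neg_mem (nsmul_mem (natCast_gcd_mem_zmultiples g p) _))
  rw [Nat.dvd_iff_mod_eq_zero]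
  by_contra hr
  exact hgap _ (Nat.pos_of_ne_zero hr)
    ((Nat.mod_lt v hc).trans_le (Nat.le_of_dvd hg (Nat.gcd_dvd_left g p))) hmem

theorem eq_univ_of_gap {d : ℕ} (hd : p.Coprime d) (hg : 0 < g) (hS : ∀ x ∈ S, x + g ∈ S)
    {a : ZMod p} (ha : a ∈ S) (hgap : ∀ t : ℕ, 0 < t → t < g → a + t ∉ S) (had : a + d ∈ S) :
    S = Set.univ := by
  have hcd := gcd_dvd_val_sub_of_gap hg hS hgap had
  rw [add_sub_cancel_left, val_natCast, Nat.dvd_mod_iff (Nat.gcd_dvd_right g p)] at hcd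
  have hc : g.gcd p = 1 := Nat.dvd_one.mp (hd ▸ Nat.dvd_gcd (Nat.gcd_dvd_right g p) hcd)
  have hone : (1 : ZMod p) ∈ AddSubgroup.zmultiples (g : ZMod p) := by
    simpa [hc] using natCast_gcd_mem_zmultiples g p
  refine Set.eq_univ_of_forall fun z => ?_
  have hz : z - a ∈ AddSubgroup.zmultiples (g : ZMod p) := by
    simpa [natCast_zmod_val] using nsmul_mem hone (z - a).val
  simpa using add_mem_of_mem_zmultiples hS ha hz

end ZMod

section Gap

variable {p : ℕ} [NeZero p] {B : Finset ℕ} {z : ZMod p}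

theorem gapAt_val_pos_and_add_mem (hz : z.val ∈ B) :
    0 < gapAt p B z.val ∧ (z + gapAt p B z.val).val ∈ B := by
  rw [ZMod.val_add_natCast]
  exact Nat.sInf_mem (s := {t | 0 < t ∧ (z.val + t) % p ∈ B})
    ⟨p, NeZero.pos p, by rwa [Nat.add_mod_right, Nat.mod_eq_of_lt z.val_lt]⟩

theorem val_add_natCast_notMem_of_lt_gapAt {t : ℕ} (ht : 0 < t)
    (htg : t < gapAt p B z.val) : (z + t).val ∉ B := by
  rw [ZMod.val_add_natCast]
  exact fun h => Nat.notMem_of_lt_sInf htg ⟨ht, h⟩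

end Gap

/-- If a TG-sequence `{(a + i d) mod p : 0 ≤ i < q}` with `gcd(p, d) = 1` and
`0 < q < p` has exactly one gap size, then `q = 1`. -/
theorem one_gap_size (p d a q : ℕ) (hp : 0 < p) (hd : Nat.gcd p d = 1)
    (hq : 0 < q) (hqp : q < p)
    (B : Finset ℕ) (hB : B = (Finset.range q).image (fun i => (a + i * d) % p))
    (hone : (gapSizes p B).card = 1) :
    q = 1 := by
  have : NeZero p := ⟨hp.ne'⟩
  by_contra hq1
  obtain ⟨g, hg⟩ := Finset.card_eq_one.mp hone
  have hgapAt : ∀ x ∈ B, gapAt p B x = g := fun x hx =>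
    Finset.mem_singleton.mp (hg ▸ Finset.mem_image_of_mem _ hx)
  have hterm : ∀ i < q, ((a + i * d : ℕ) : ZMod p).val ∈ B := fun i hi => by
    rw [ZMod.val_natCast, hB]
    exact Finset.mem_image_of_mem _ (Finset.mem_range.mpr hi)
  have hfirst : (a : ZMod p).val ∈ B := by simpa using hterm 0 hq
  have huniv : {z : ZMod p | z.val ∈ B} = Set.univ := by
    refine ZMod.eq_univ_of_gap hd (hgapAt _ hfirst ▸ (gapAt_val_pos_and_add_mem hfirst).1) ?_
      hfirst ?_ (by simpa using hterm 1 (by omega))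
    · exact fun z hz => hgapAt _ hz ▸ (gapAt_val_pos_and_add_mem hz).2
    · exact fun t ht htg => val_add_natCast_notMem_of_lt_gapAt ht (hgapAt _ hfirst ▸ htg)
  have hrange : Finset.range p ⊆ B := fun n hn => by
    have hn' : ((n : ZMod p)).val ∈ B := Set.eq_univ_iff_forall.mp huniv (n : ZMod p)
    rwa [ZMod.val_natCast, Nat.mod_eq_of_lt (Finset.mem_range.mp hn)] at hn'
  have hcard : B.card ≤ q := hB ▸ Finset.card_image_le.trans (Finset.card_range q).le
  have hp_le : p ≤ B.card := by simpa using Finset.card_le_card hrange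
  omega
end

section
/- Let B be a TG-sequence with q2 > 1 points and modulus p (generated by a residue d with gcd(p,d) = 1), with smallest gap size c and largest gap size G, and suppose G > q1 for some positive integer q1. Let k be the number of larger gaps (gaps of size greater than c). If B has exactly three distinct gap sizes, then p − q1 − q2 ≥ (k−1)(G−c−1) + (q2 − k)(c−1). -/
namespace TGaux

noncomputable def g (p d : ℕ) (s : ℤ) : ℕ := ((s : ZMod p) * (d : ℕ)).val

def X (p d a : ℕ) (i : ℕ) : ℕ := (a + i * d) % p

variable {p d a q2 : ℕ} {B : Finset ℕ} {x t : ℕ}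

variable {p d : ℕ}

lemma g_lt [NeZero p] (s : ℤ) : g p d s < p := ZMod.val_lt _

lemma cast_g [NeZero p] (s : ℤ) : ((g p d s : ℕ) : ZMod p) = (s : ZMod p) * (d : ℕ) := by
  simp [g, ZMod.natCast_val, ZMod.cast_id]

lemma isUnit_d [NeZero p] (hd : Nat.gcd p d = 1) : IsUnit ((d : ℕ) : ZMod p) := by
  rw [ZMod.isUnit_iff_coprime]
  rwa [Nat.Coprime, Nat.gcd_comm]

lemma g_eq_zero_iff [NeZero p] (hd : Nat.gcd p d = 1) (s : ℤ) :
    g p d s = 0 ↔ (p : ℤ) ∣ s := by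
  rw [g, ZMod.val_eq_zero, (isUnit_d hd).mul_left_eq_zero,
    ZMod.intCast_zmod_eq_zero_iff_dvd]

lemma g_pos [NeZero p] (hd : Nat.gcd p d = 1) {s : ℤ} (h : ¬ (p:ℤ) ∣ s) : 0 < g p d s := by
  rcases Nat.eq_zero_or_pos (g p d s) with h0 | h0
  · exact absurd ((g_eq_zero_iff hd s).mp h0) h
  · exact h0

lemma cast_eq_of_lt {m n : ℕ} (hm : m < p) (hn : n < p) (h : (m : ZMod p) = n) : m = n := by
  have h1 := ZMod.val_cast_of_lt hm
  have h2 := ZMod.val_cast_of_lt hn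
  rw [← h1, ← h2, h]

lemma g_sub [NeZero p] {s t : ℤ} (h : g p d t < g p d s) :
    g p d (s - t) = g p d s - g p d t := by
  have hlt : g p d s - g p d t < p := lt_of_le_of_lt (Nat.sub_le _ _) (g_lt s)
  refine cast_eq_of_lt (g_lt _) hlt ?_
  rw [cast_g, Nat.cast_sub h.le, cast_g, cast_g]
  push_cast
  ring

lemma g_inj [NeZero p] (hd : Nat.gcd p d = 1) {s t : ℤ} (h : g p d s = g p d t) :
    (p : ℤ) ∣ s - t := by
  have h1 : ((s : ZMod p)) * (d:ℕ) = ((t : ZMod p)) * (d:ℕ) := by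
    rw [← cast_g (d := d) s, ← cast_g (d := d) t, h]
  have h2 : (((s - t : ℤ)) : ZMod p) * (d:ℕ) = 0 := by
    push_cast
    rw [sub_mul, h1, sub_self]
  rw [(isUnit_d hd).mul_left_eq_zero, ZMod.intCast_zmod_eq_zero_iff_dvd] at h2
  exact h2

lemma g_neg [NeZero p] (hd : Nat.gcd p d = 1) {s : ℤ} (h : ¬ (p:ℤ) ∣ s) :
    g p d (-s) = p - g p d s := by
  have h1 : 0 < g p d s := g_pos hd h
  have hp : 0 < p := Nat.pos_of_ne_zero (NeZero.ne p)
  have hlt : p - g p d s < p := by omega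
  refine cast_eq_of_lt (g_lt _) hlt ?_
  rw [cast_g, Nat.cast_sub (le_of_lt (g_lt s)), cast_g, ZMod.natCast_self]
  push_cast
  ring




lemma X_lt (hp : 0 < p) (i : ℕ) : X p d a i < p := Nat.mod_lt _ hp

lemma cast_X [NeZero p] (i : ℕ) : ((X p d a i : ℕ) : ZMod p) = (a : ZMod p) + (i : ℕ) * (d : ℕ) := by
  simp [X, ZMod.natCast_mod]

lemma mem_B (hB : B = (Finset.range q2).image (fun i => (a + i * d) % p)) {y : ℕ} :
    y ∈ B ↔ ∃ i, i < q2 ∧ y = X p d a i := by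
  subst hB
  simp only [Finset.mem_image, Finset.mem_range, X]
  constructor
  · rintro ⟨i, hi, rfl⟩; exact ⟨i, hi, rfl⟩
  · rintro ⟨i, hi, rfl⟩; exact ⟨i, hi, rfl⟩

lemma B_lt (hp : 0 < p) (hB : B = (Finset.range q2).image (fun i => (a + i * d) % p))
    {y : ℕ} (hy : y ∈ B) : y < p := by
  obtain ⟨i, _, rfl⟩ := (mem_B hB).mp hy
  exact X_lt hp i

lemma not_dvd_sub (hq2p : q2 < p) {i j : ℕ} (hi : i < q2) (hj : j < q2) (hne : j ≠ i) :
    ¬ (p:ℤ) ∣ ((j:ℤ) - (i:ℤ)) := by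
  intro hdvd
  have := Int.eq_zero_of_abs_lt_dvd hdvd (by
    rw [abs_sub_lt_iff]; constructor <;> push_cast <;> omega)
  omega

lemma gap_nonempty (hp : 0 < p) {x : ℕ} (hx : x < p) (hxB : x ∈ B) :
    p ∈ {t : ℕ | 0 < t ∧ (x + t) % p ∈ B} := by
  refine ⟨hp, ?_⟩
  rw [Nat.add_mod_right, Nat.mod_eq_of_lt hx]
  exact hxB

lemma gap_mem (hp : 0 < p) {x : ℕ} (hx : x < p) (hxB : x ∈ B) :
    0 < gapAt p B x ∧ (x + gapAt p B x) % p ∈ B :=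
  Nat.sInf_mem ⟨p, gap_nonempty hp hx hxB⟩

lemma gap_le_of (hs : 0 < t ∧ (x + t) % p ∈ B) : gapAt p B x ≤ t := Nat.sInf_le hs

-- upper bound by a jump
lemma gap_le (hp : 0 < p) (hd : Nat.gcd p d = 1) (hq2p : q2 < p)
    (hB : B = (Finset.range q2).image (fun i => (a + i * d) % p))
    {i j : ℕ} (hi : i < q2) (hj : j < q2) (hne : j ≠ i) :
    gapAt p B (X p d a i) ≤ g p d ((j:ℤ) - i) := by
  haveI : NeZero p := ⟨hp.ne'⟩
  refine gap_le_of ⟨g_pos hd (not_dvd_sub hq2p hi hj hne), ?_⟩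
  have hcast : (((X p d a i + g p d ((j:ℤ) - i)) % p : ℕ) : ZMod p) = ((X p d a j : ℕ) : ZMod p) := by
    rw [ZMod.natCast_mod, Nat.cast_add, cast_g, cast_X, cast_X]
    push_cast
    ring
  rw [cast_eq_of_lt (Nat.mod_lt _ hp) (X_lt hp j) hcast]
  exact (mem_B hB).mpr ⟨j, hj, rfl⟩

lemma gap_eq (hp : 0 < p) (hd : Nat.gcd p d = 1) (hq2 : 1 < q2) (hq2p : q2 < p)
    (hB : B = (Finset.range q2).image (fun i => (a + i * d) % p))
    {i : ℕ} (hi : i < q2) :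
    ∃ j, j < q2 ∧ j ≠ i ∧ gapAt p B (X p d a i) = g p d ((j:ℤ) - i) := by
  haveI : NeZero p := ⟨hp.ne'⟩
  set x := X p d a i with hxdef
  have hxB : x ∈ B := (mem_B hB).mpr ⟨i, hi, rfl⟩
  have hx : x < p := X_lt hp i
  obtain ⟨hpos, hmem⟩ := gap_mem hp hx hxB
  set t := gapAt p B x with htdef
  -- t < p
  have hex : ∃ j', j' < q2 ∧ j' ≠ i := by
    rcases Nat.eq_zero_or_pos i with h0 | h0
    · exact ⟨1, hq2, by omega⟩
    · exact ⟨0, by omega, by omega⟩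
  obtain ⟨j', hj', hj'i⟩ := hex
  have htp : t < p := lt_of_le_of_lt (gap_le hp hd hq2p hB hi hj' hj'i) (g_lt _)
  obtain ⟨j, hj, hyX⟩ := (mem_B hB).mp hmem
  refine ⟨j, hj, ?_, ?_⟩
  · rintro rfl
    -- then t ≡ 0 mod p, 0 < t < p, contradiction
    have : ((t : ℕ) : ZMod p) = 0 := by
      have hc : (((x + t) % p : ℕ) : ZMod p) = (x : ZMod p) := by rw [hyX, hxdef]
      rw [ZMod.natCast_mod, Nat.cast_add] at hc
      linear_combination hc
    rw [ZMod.natCast_eq_zero_iff] at this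
    have := Nat.le_of_dvd hpos this
    omega
  · have hc : ((t : ℕ) : ZMod p) = ((g p d ((j:ℤ) - i) : ℕ) : ZMod p) := by
      have hc1 : (((x + t) % p : ℕ) : ZMod p) = ((X p d a j : ℕ) : ZMod p) := by rw [hyX]
      rw [ZMod.natCast_mod, Nat.cast_add, cast_X, cast_X] at hc1
      rw [cast_g]
      push_cast at hc1 ⊢
      linear_combination hc1
    exact cast_eq_of_lt htp (g_lt _) hc
lemma pred_unique (hp : 0 < p) (hBlt : ∀ y ∈ B, y < p) {x x' j j' : ℕ}
    (hx : x ∈ B) (hx' : x' ∈ B) (hj : j < gapAt p B x) (hj' : j' < gapAt p B x')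
    (hji : j' ≤ j) (heq : (x + j) % p = (x' + j') % p) : x = x' := by
  haveI : NeZero p := ⟨hp.ne'⟩
  have hxlt := hBlt x hx
  have hx'lt := hBlt x' hx'
  have hxx' : (x + (j - j')) % p = x' := by
    apply cast_eq_of_lt (Nat.mod_lt _ hp) hx'lt
    have hc : (((x + j) % p : ℕ) : ZMod p) = (((x' + j') % p : ℕ) : ZMod p) := by rw [heq]
    rw [ZMod.natCast_mod, ZMod.natCast_mod] at hc
    rw [ZMod.natCast_mod]
    push_cast [Nat.cast_sub hji] at hc ⊢
    linear_combination hc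
  rcases Nat.eq_zero_or_pos (j - j') with h0 | h0
  · rw [h0, Nat.add_zero, Nat.mod_eq_of_lt hxlt] at hxx'
    exact hxx'
  · exfalso
    have := gap_le_of (B := B) (x := x) ⟨h0, by rw [hxx']; exact hx'⟩
    omega

lemma sum_gap (hp : 0 < p) (hBne : B.Nonempty) (hBlt : ∀ y ∈ B, y < p) :
    ∑ x ∈ B, gapAt p B x = p := by
  haveI : NeZero p := ⟨hp.ne'⟩
  have hcover : Finset.range p =
      B.biUnion (fun x => (Finset.range (gapAt p B x)).image (fun j => (x + j) % p)) := by
    apply Finset.ext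
    intro y
    simp only [Finset.mem_range, Finset.mem_biUnion, Finset.mem_image]
    constructor
    · intro hy
      obtain ⟨b, hb⟩ := hBne
      have hble : b < p := hBlt b hb
      set S := {u : ℕ | u < p ∧ (y + p - u) % p ∈ B} with hS
      have hSne : ((y + p - b) % p) ∈ S := by
        refine ⟨Nat.mod_lt _ hp, ?_⟩
        have h1 : (y + p - (y + p - b) % p) % p = b := by
          apply cast_eq_of_lt (Nat.mod_lt _ hp) hble
          have hle1 : (y + p - b) % p ≤ y + p := le_of_lt (lt_of_lt_of_le (Nat.mod_lt _ hp) (by omega))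
          rw [ZMod.natCast_mod, Nat.cast_sub hle1, ZMod.natCast_mod, Nat.cast_sub (by omega : b ≤ y + p)]
          push_cast
          ring
        rw [h1]; exact hb
      set u₀ := sInf S with hu₀def
      have hu₀ : u₀ ∈ S := Nat.sInf_mem ⟨_, hSne⟩
      have hu₀p : u₀ < p := hu₀.1
      set x := (y + p - u₀) % p with hxdef
      have hxB : x ∈ B := hu₀.2
      have hxlt : x < p := Nat.mod_lt _ hp
      have hclaim1 : (x + u₀) % p = y := by
        rw [hxdef, Nat.mod_add_mod, Nat.sub_add_cancel (by omega : u₀ ≤ y + p),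
          Nat.add_mod_right, Nat.mod_eq_of_lt hy]
      refine ⟨x, hxB, u₀, ?_, hclaim1⟩
      -- u₀ < gapAt
      by_contra hcon
      push_neg at hcon
      obtain ⟨hgpos, hgmem⟩ := gap_mem hp hxlt hxB
      have huS : u₀ - gapAt p B x ∈ S := by
        refine ⟨by omega, ?_⟩
        have he : y + p - (u₀ - gapAt p B x) = (y + p - u₀) + gapAt p B x := by omega
        rw [he, ← Nat.mod_add_mod]
        exact hgmem
      have := Nat.sInf_le huS
      omega
    · rintro ⟨x, hxB, j, hj, rfl⟩
      exact Nat.mod_lt _ hp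
  have hdisj : ∀ x ∈ B, ∀ x' ∈ B, x ≠ x' →
      Disjoint ((Finset.range (gapAt p B x)).image (fun j => (x + j) % p))
        ((Finset.range (gapAt p B x')).image (fun j => (x' + j) % p)) := by
    intro x hx x' hx' hne
    rw [Finset.disjoint_left]
    rintro y hy1 hy2
    simp only [Finset.mem_image, Finset.mem_range] at hy1 hy2
    obtain ⟨j, hj, hje⟩ := hy1
    obtain ⟨j', hj', hj'e⟩ := hy2
    have heq : (x + j) % p = (x' + j') % p := by rw [hje, hj'e]
    rcases le_total j' j with hle | hle
    · exact hne (pred_unique hp hBlt hx hx' hj hj' hle heq)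
    · exact hne (pred_unique hp hBlt hx' hx hj' hj hle heq.symm).symm
  have hcard : ∀ x ∈ B, ((Finset.range (gapAt p B x)).image (fun j => (x + j) % p)).card
      = gapAt p B x := by
    intro x hx
    rw [Finset.card_image_of_injOn, Finset.card_range]
    intro j hj j' hj' hjj
    simp only [Finset.mem_coe, Finset.mem_range] at hj hj'
    have hjj' : (x + j) % p = (x + j') % p := hjj
    have hgp : gapAt p B x ≤ p := gap_le_of (gap_nonempty hp (hBlt x hx) hx)
    apply cast_eq_of_lt (p := p) (by omega) (by omega)
    have : (((x + j) % p : ℕ) : ZMod p) = (((x + j') % p : ℕ) : ZMod p) := by rw [hjj']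
    rw [ZMod.natCast_mod, ZMod.natCast_mod] at this
    push_cast at this
    linear_combination this
  calc ∑ x ∈ B, gapAt p B x = ∑ x ∈ B, ((Finset.range (gapAt p B x)).image (fun j => (x + j) % p)).card := by
        exact (Finset.sum_congr rfl hcard).symm
    _ = (B.biUnion (fun x => (Finset.range (gapAt p B x)).image (fun j => (x + j) % p))).card := by
        rw [Finset.card_biUnion hdisj]
    _ = (Finset.range p).card := by rw [← hcover]
    _ = p := Finset.card_range p
lemma not_dvd_int (hq2p : q2 < p) {s : ℤ} (h0 : s ≠ 0) (habs : |s| < q2) : ¬ (p:ℤ) ∣ s := by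
  intro hdvd
  exact h0 (Int.eq_zero_of_abs_lt_dvd hdvd (by push_cast; omega))

lemma gap_le' (hp : 0 < p) (hd : Nat.gcd p d = 1) (hq2p : q2 < p)
    (hB : B = (Finset.range q2).image (fun i => (a + i * d) % p))
    {i : ℕ} (hi : i < q2) {s : ℤ} (hs0 : s ≠ 0) (hs1 : -(i:ℤ) ≤ s) (hs2 : (i:ℤ) + s < q2) :
    gapAt p B (X p d a i) ≤ g p d s := by
  set j := (s + i).toNat with hjdef
  have hj : (j:ℤ) = s + i := Int.toNat_of_nonneg (by omega)
  have hjq : j < q2 := by omega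
  have hne : j ≠ i := by
    intro h; rw [h] at hj; omega
  have := gap_le hp hd hq2p hB hi hjq hne
  rwa [show (j:ℤ) - i = s by omega] at this

lemma gap_eq' (hp : 0 < p) (hd : Nat.gcd p d = 1) (hq2 : 1 < q2) (hq2p : q2 < p)
    (hB : B = (Finset.range q2).image (fun i => (a + i * d) % p))
    {i : ℕ} (hi : i < q2) :
    ∃ s : ℤ, s ≠ 0 ∧ -(i:ℤ) ≤ s ∧ (i:ℤ) + s < q2 ∧ gapAt p B (X p d a i) = g p d s := by
  obtain ⟨j, hj, hne, heq⟩ := gap_eq hp hd hq2 hq2p hB hi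
  refine ⟨(j:ℤ) - i, ?_, by omega, by omega, heq⟩
  intro h
  have : (j:ℤ) = i := by omega
  exact hne (by omega)

-- the main structural classification
lemma gap_classify (hp : 0 < p) (hd : Nat.gcd p d = 1) (hq2 : 1 < q2) (hq2p : q2 < p)
    (hB : B = (Finset.range q2).image (fun i => (a + i * d) % p)) :
    ∃ A Bb : ℕ, 0 < A ∧ 0 < Bb ∧
      ∀ i, i < q2 → gapAt p B (X p d a i) = A ∨ gapAt p B (X p d a i) = Bb ∨
        gapAt p B (X p d a i) = A + Bb := by
  haveI : NeZero p := ⟨hp.ne'⟩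
  obtain ⟨α, hαmem, hαmin⟩ := Finset.exists_min_image (Finset.Icc 1 (q2-1))
    (fun s : ℕ => g p d (s:ℤ)) ⟨1, by rw [Finset.mem_Icc]; omega⟩
  obtain ⟨β, hβmem, hβmin⟩ := Finset.exists_min_image (Finset.Icc 1 (q2-1))
    (fun s : ℕ => g p d (-(s:ℤ))) ⟨1, by rw [Finset.mem_Icc]; omega⟩
  rw [Finset.mem_Icc] at hαmem hβmem
  obtain ⟨hα1, hα2⟩ := hαmem
  obtain ⟨hβ1, hβ2⟩ := hβmem
  set A := g p d (α:ℤ) with hAdef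
  set Bb := g p d (-(β:ℤ)) with hBbdef
  have hApos : 0 < A := g_pos hd (not_dvd_int hq2p (by omega : (α:ℤ) ≠ 0) (by rw [abs_of_nonneg (by omega : (0:ℤ) ≤ α)]; omega))
  have hBbpos : 0 < Bb := g_pos hd (not_dvd_int hq2p (by omega : (-(β:ℤ)) ≠ 0) (by rw [abs_neg, abs_of_nonneg (by omega : (0:ℤ) ≤ β)]; omega))
  -- int versions of minimality
  have hαZ : ∀ s : ℤ, 1 ≤ s → s < q2 → A ≤ g p d s := by
    intro s h1 h2
    have hs : s = ((s.toNat : ℕ) : ℤ) := (Int.toNat_of_nonneg (by omega)).symm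
    rw [hs]
    exact hαmin s.toNat (by rw [Finset.mem_Icc]; omega)
  have hβZ : ∀ s : ℤ, -(q2:ℤ) < s → s ≤ -1 → Bb ≤ g p d s := by
    intro s h1 h2
    have hs : s = -(((-s).toNat : ℕ) : ℤ) := by
      have := Int.toNat_of_nonneg (by omega : (0:ℤ) ≤ -s); omega
    rw [hs]
    exact hβmin (-s).toNat (by rw [Finset.mem_Icc]; omega)
  have hαZ' : ∀ s : ℤ, 1 ≤ s → s < q2 → s ≠ (α:ℤ) → A < g p d s := by
    intro s h1 h2 h3
    rcases lt_or_eq_of_le (hαZ s h1 h2) with h | h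
    · exact h
    · exfalso
      have := g_inj hd h.symm
      have : s - α = 0 := Int.eq_zero_of_abs_lt_dvd this (by
        rw [abs_sub_lt_iff]; constructor <;> push_cast <;> omega)
      omega
  have hβZ' : ∀ s : ℤ, -(q2:ℤ) < s → s ≤ -1 → s ≠ -(β:ℤ) → Bb < g p d s := by
    intro s h1 h2 h3
    rcases lt_or_eq_of_le (hβZ s h1 h2) with h | h
    · exact h
    · exfalso
      have := g_inj hd h.symm
      have : s - (-(β:ℤ)) = 0 := Int.eq_zero_of_abs_lt_dvd this (by
        rw [abs_sub_lt_iff]; constructor <;> push_cast <;> omega)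
      omega
  -- key identities
  have key1 : ∀ s : ℤ, 1 ≤ s → s < (α:ℤ) → g p d s = A + g p d (s - α) := by
    intro s h1 h2
    have hlt : A < g p d s := hαZ' s h1 (by omega) (by omega)
    have := g_sub (s := s) (t := (α:ℤ)) hlt
    omega
  have key2 : ∀ s : ℤ, -(β:ℤ) < s → s ≤ -1 → g p d s = Bb + g p d (s + β) := by
    intro s h1 h2
    have hlt : Bb < g p d s := hβZ' s (by omega) h2 (by omega)
    have := g_sub (s := s) (t := -(β:ℤ)) hlt
    rw [sub_neg_eq_add] at this
    omega
  refine ⟨A, Bb, hApos, hBbpos, ?_⟩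
  intro i hi
  obtain ⟨s, hs0, hs1, hs2, hgs⟩ := gap_eq' hp hd hq2 hq2p hB hi
  by_cases h1 : i + α < q2 <;> by_cases h2 : β ≤ i
  · -- R2 : gap = min A Bb
    have hle1 : gapAt p B (X p d a i) ≤ A := gap_le' hp hd hq2p hB hi (by omega) (by omega) (by omega)
    have hle2 : gapAt p B (X p d a i) ≤ Bb := gap_le' hp hd hq2p hB hi (s := -(β:ℤ)) (by omega) (by omega) (by omega)
    -- lower bound : gap = g s ≥ A or Bb
    rcases lt_or_gt_of_ne hs0 with hneg | hpos
    · right; left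
      have := hβZ s (by omega) (by omega)
      omega
    · left
      have := hαZ s (by omega) (by omega)
      omega
  · -- R1 : gap = A
    left
    have hle1 : gapAt p B (X p d a i) ≤ A := gap_le' hp hd hq2p hB hi (by omega) (by omega) (by omega)
    rcases lt_or_gt_of_ne hs0 with hneg | hpos
    · have hk := key2 s (by omega) (by omega)
      have := hαZ (s + β) (by omega) (by omega)
      omega
    · have := hαZ s (by omega) (by omega)
      omega
  · -- R3 : gap = Bb
    right; left
    have hle2 : gapAt p B (X p d a i) ≤ Bb := gap_le' hp hd hq2p hB hi (s := -(β:ℤ)) (by omega) (by omega) (by omega)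
    rcases lt_or_gt_of_ne hs0 with hneg | hpos
    · have := hβZ s (by omega) (by omega)
      omega
    · have hk := key1 s (by omega) (by omega)
      have := hβZ (s - α) (by omega) (by omega)
      omega
  · -- R4 : gap = A + Bb
    right; right
    have hlow : A + Bb ≤ gapAt p B (X p d a i) := by
      rcases lt_or_gt_of_ne hs0 with hneg | hpos
      · have hk := key2 s (by omega) (by omega)
        have := hαZ (s + β) (by omega) (by omega)
        omega
      · have hk := key1 s (by omega) (by omega)
        have := hβZ (s - α) (by omega) (by omega)
        omega
    have hglt : gapAt p B (X p d a i) < p := by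
      rw [hgs]; exact g_lt s
    have hαβ : α ≠ β := by
      intro h
      have hnd : ¬ (p:ℤ) ∣ (α:ℤ) := not_dvd_int hq2p (by omega) (by rw [abs_of_nonneg (by omega : (0:ℤ) ≤ α)]; omega)
      have := g_neg hd hnd
      have hAlt : A < p := g_lt _
      rw [← h] at hBbdef
      omega
    rcases Nat.lt_or_ge α β with hab | hab
    · -- jump α - β (negative)
      have hup : gapAt p B (X p d a i) ≤ g p d ((α:ℤ) - β) :=
        gap_le' hp hd hq2p hB hi (by omega) (by omega) (by omega)
      have hk := key2 ((α:ℤ) - β) (by omega) (by omega)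
      rw [show (α:ℤ) - β + β = (α:ℤ) by ring] at hk
      omega
    · -- jump α - β (positive)
      have hab' : β < α := by omega
      have hup : gapAt p B (X p d a i) ≤ g p d ((α:ℤ) - β) :=
        gap_le' hp hd hq2p hB hi (by omega) (by omega) (by omega)
      have hk := key1 ((α:ℤ) - β) (by omega) (by omega)
      rw [show (α:ℤ) - β - α = -(β:ℤ) by ring] at hk
      omega
lemma X_inj (hp : 0 < p) (hd : Nat.gcd p d = 1) (hq2p : q2 < p)
    {i j : ℕ} (hi : i < q2) (hj : j < q2) (h : X p d a i = X p d a j) : i = j := by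
  haveI : NeZero p := ⟨hp.ne'⟩
  have hc : ((X p d a i : ℕ) : ZMod p) = ((X p d a j : ℕ) : ZMod p) := by rw [h]
  rw [cast_X, cast_X] at hc
  have h2 : (((i:ℤ) - j : ℤ) : ZMod p) * (d:ℕ) = 0 := by
    push_cast
    linear_combination hc
  rw [(isUnit_d hd).mul_left_eq_zero, ZMod.intCast_zmod_eq_zero_iff_dvd] at h2
  have := Int.eq_zero_of_abs_lt_dvd h2 (by rw [abs_sub_lt_iff]; constructor <;> push_cast <;> omega)
  omega

lemma B_card (hp : 0 < p) (hd : Nat.gcd p d = 1) (hq2p : q2 < p)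
    (hB : B = (Finset.range q2).image (fun i => (a + i * d) % p)) : B.card = q2 := by
  rw [hB, Finset.card_image_of_injOn, Finset.card_range]
  intro i hi j hj h
  simp only [Finset.mem_coe, Finset.mem_range] at hi hj
  exact X_inj hp hd hq2p hi hj h


end TGaux

/-- Corollary 3(ii). -/
theorem gap_count_three_sizes (p d a q1 q2 c G k : ℕ) (hp : 0 < p)
    (hd : Nat.gcd p d = 1) (hq1 : 0 < q1) (hq2 : 1 < q2) (hq2p : q2 < p)
    (B : Finset ℕ) (hB : B = (Finset.range q2).image (fun i => (a + i * d) % p))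
    (hc : c ∈ gapSizes p B) (hcmin : ∀ g ∈ gapSizes p B, c ≤ g)
    (hG : G ∈ gapSizes p B) (hGmax : ∀ g ∈ gapSizes p B, g ≤ G)
    (hGq1 : q1 < G)
    (hk : k = (B.filter (fun x => c < gapAt p B x)).card)
    (hthree : (gapSizes p B).card = 3) :
    ((k : ℤ) - 1) * ((G : ℤ) - (c : ℤ) - 1) + ((q2 : ℤ) - (k : ℤ)) * ((c : ℤ) - 1)
      ≤ (p : ℤ) - (q1 : ℤ) - (q2 : ℤ) := by
  haveI : NeZero p := ⟨hp.ne'⟩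
  have hBlt : ∀ y ∈ B, y < p := fun y hy => TGaux.B_lt hp hB hy
  have hBne : B.Nonempty := ⟨TGaux.X p d a 0, (TGaux.mem_B hB).mpr ⟨0, by omega, rfl⟩⟩
  obtain ⟨A, Bb, hApos, hBbpos, hclass⟩ := TGaux.gap_classify hp hd hq2 hq2p hB
  have hclass' : ∀ x ∈ B, gapAt p B x = A ∨ gapAt p B x = Bb ∨ gapAt p B x = A + Bb := by
    intro x hx
    obtain ⟨i, hi, rfl⟩ := (TGaux.mem_B hB).mp hx
    exact hclass i hi
  have hsub : gapSizes p B ⊆ {A, Bb, A + Bb} := by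
    intro v hv
    rw [gapSizes, Finset.mem_image] at hv
    obtain ⟨x, hx, rfl⟩ := hv
    rcases hclass' x hx with h | h | h <;> rw [h] <;> simp
  have hset : gapSizes p B = {A, Bb, A + Bb} := by
    apply Finset.eq_of_subset_of_card_le hsub
    rw [hthree]
    refine le_trans (Finset.card_insert_le _ _) (Nat.succ_le_succ ?_)
    refine le_trans (Finset.card_insert_le _ _) (Nat.succ_le_succ ?_)
    simp
  have hAmem : A ∈ gapSizes p B := by rw [hset]; simp
  have hBbmem : Bb ∈ gapSizes p B := by rw [hset]; simp
  have hABmem : A + Bb ∈ gapSizes p B := by rw [hset]; simp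
  have hcA : c ≤ A := hcmin _ hAmem
  have hcB : c ≤ Bb := hcmin _ hBbmem
  have hABle : A + Bb ≤ G := hGmax _ hABmem
  have hGeq : G = A + Bb := by
    have h := hG
    rw [hset] at h
    simp only [Finset.mem_insert, Finset.mem_singleton] at h
    rcases h with h | h | h <;> omega
  have hcor : c = A ∨ c = Bb := by
    have h := hc
    rw [hset] at h
    simp only [Finset.mem_insert, Finset.mem_singleton] at h
    rcases h with h | h | h <;> omega
  have hcpos : 0 < c := by rcases hcor with h | h <;> omega
  have hcltG : c < G := by rcases hcor with h | h <;> omega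
  have hlarger : ∀ x ∈ B, c < gapAt p B x → G - c ≤ gapAt p B x := by
    intro x hx hcx
    rcases hclass' x hx with h | h | h <;> rcases hcor with h' | h' <;> omega
  have hsumB : ∑ x ∈ B, gapAt p B x = p := TGaux.sum_gap hp hBne hBlt
  have hBcard : B.card = q2 := TGaux.B_card hp hd hq2p hB
  have hksplit := Finset.sum_filter_add_sum_filter_not B (fun x => c < gapAt p B x) (gapAt p B)
  have hcompeq : ∀ x ∈ B.filter (fun x => ¬ c < gapAt p B x), gapAt p B x = c := by
    intro x hx
    rw [Finset.mem_filter] at hx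
    have h1 : gapAt p B x ∈ gapSizes p B := Finset.mem_image_of_mem _ hx.1
    have := hcmin _ h1
    have := hx.2
    omega
  have hcomp : ∑ x ∈ B.filter (fun x => ¬ c < gapAt p B x), gapAt p B x = (q2 - k) * c := by
    rw [Finset.sum_congr rfl hcompeq, Finset.sum_const, smul_eq_mul]
    congr 1
    have := Finset.card_filter_add_card_filter_not (s := B) (p := fun x => c < gapAt p B x)
    omega
  obtain ⟨x₀, hx₀B, hx₀⟩ := Finset.mem_image.mp hG
  have hx₀F : x₀ ∈ B.filter (fun x => c < gapAt p B x) :=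
    Finset.mem_filter.mpr ⟨hx₀B, by rw [hx₀]; omega⟩
  have hk1 : 1 ≤ k := by rw [hk]; exact Finset.card_pos.mpr ⟨x₀, hx₀F⟩
  have hkq2 : k ≤ q2 := by rw [hk]; exact le_trans (Finset.card_filter_le _ _) (le_of_eq hBcard)
  have hFsum : G + (k - 1) * (G - c) ≤ ∑ x ∈ B.filter (fun x => c < gapAt p B x), gapAt p B x := by
    rw [← Finset.add_sum_erase _ (gapAt p B) hx₀F, hx₀]
    have hcard : ((B.filter (fun x => c < gapAt p B x)).erase x₀).card = k - 1 := by
      rw [Finset.card_erase_of_mem hx₀F, hk]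
    refine Nat.add_le_add le_rfl ?_
    calc (k - 1) * (G - c) = ((B.filter (fun x => c < gapAt p B x)).erase x₀).card * (G - c) := by
          rw [hcard]
      _ ≤ ∑ x ∈ (B.filter (fun x => c < gapAt p B x)).erase x₀, gapAt p B x := by
          rw [← smul_eq_mul]
          refine Finset.card_nsmul_le_sum _ _ _ ?_
          intro x hx
          have hx' := Finset.mem_of_mem_erase hx
          rw [Finset.mem_filter] at hx'
          exact hlarger x hx'.1 hx'.2
  have hfinal : G + (k - 1) * (G - c) + (q2 - k) * c ≤ p := by
    rw [← hsumB, ← hksplit, ← hcomp]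
    exact Nat.add_le_add hFsum le_rfl
  have hc1 : ((k - 1 : ℕ) : ℤ) = (k : ℤ) - 1 := by omega
  have hc2 : ((G - c : ℕ) : ℤ) = (G : ℤ) - c := by omega
  have hc3 : ((q2 - k : ℕ) : ℤ) = (q2 : ℤ) - k := by omega
  have hfinal' : (G : ℤ) + ((k:ℤ) - 1) * ((G:ℤ) - c) + ((q2:ℤ) - k) * c ≤ (p:ℤ) := by
    have := hfinal
    zify at this
    rw [hc1, hc2, hc3] at this
    exact this
  have hGq1' : (q1 : ℤ) + 1 ≤ (G : ℤ) := by exact_mod_cast hGq1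
  have hcpos' : (1 : ℤ) ≤ (c : ℤ) := by exact_mod_cast hcpos
  nlinarith [hfinal', hGq1', hcpos']
end

section
/- Let q1, q2, q3, q4 be positive integers with q1 ≥ q2 + 1 ≥ q3 + 2 ≥ q4 + 3 ≥ 4, and set p = q1 + q2 + q3 + q4. Let B be a TG-sequence with q2 points and modulus p (generated by a residue d with gcd(p,d) = 1) whose largest gap size G satisfies G ≥ q1 + 1. Let c be the smallest gap size of B and k the number of larger gaps (gaps of size greater than c) of B. Then c ∈ {1, 2} and k ∈ {1, 2}. -/
namespace TGProof


def dl (p d i j : ℕ) : ℕ := (j * d + (p - i * d % p)) % p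

lemma eq_of_modeq_lt {p m n : ℕ} (h : m ≡ n [MOD p]) (hm : m < p) (hn : n < p) : m = n := by
  rwa [Nat.ModEq, Nat.mod_eq_of_lt hm, Nat.mod_eq_of_lt hn] at h

lemma dl_lt {p : ℕ} (hp : 0 < p) (d i j : ℕ) : dl p d i j < p := Nat.mod_lt _ hp

lemma dl_modeq {p : ℕ} (hp : 0 < p) (d i j : ℕ) :
    i * d + dl p d i j ≡ j * d [MOD p] := by
  have h1 : i * d % p < p := Nat.mod_lt _ hp
  have h2 : p * (i * d / p) + i * d % p = i * d := Nat.div_add_mod _ _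
  calc i * d + dl p d i j
      ≡ i * d + (j * d + (p - i * d % p)) [MOD p] :=
        Nat.ModEq.add_left _ (Nat.mod_modEq _ _)
    _ = j * d + (p * (i * d / p) + p) := by omega
    _ ≡ j * d + 0 [MOD p] := Nat.ModEq.add_left _ (by
        rw [Nat.modEq_zero_iff_dvd]; exact ⟨i * d / p + 1, by ring⟩)
    _ = j * d := by ring

lemma dl_modeq' {p : ℕ} (hp : 0 < p) (d a i j : ℕ) :
    (a + i * d) + dl p d i j ≡ a + j * d [MOD p] := by
  have h := dl_modeq hp d i j
  calc (a + i * d) + dl p d i j = a + (i * d + dl p d i j) := by ring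
    _ ≡ a + j * d [MOD p] := Nat.ModEq.add_left _ h

lemma dl_eq_zero_iff {p d : ℕ} (hp : 0 < p) (hd : Nat.gcd p d = 1) {i j : ℕ}
    (hi : i < p) (hj : j < p) : dl p d i j = 0 ↔ i = j := by
  constructor
  · intro h0
    have h := dl_modeq hp d i j
    rw [h0] at h
    have h2 : i * d ≡ j * d [MOD p] := by simpa using h
    have h3 : i ≡ j [MOD p] := Nat.ModEq.cancel_right_of_coprime hd h2
    exact eq_of_modeq_lt h3 hi hj
  · rintro rfl
    have h := dl_modeq hp d i i
    have h2 : dl p d i i ≡ 0 [MOD p] := by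
      have := Nat.ModEq.add_left_cancel' (i * d) (by simpa using h : i * d + dl p d i i ≡ i * d + 0 [MOD p])
      exact this
    exact eq_of_modeq_lt h2 (dl_lt hp d i i) hp



lemma mem_B_iff {p q d a : ℕ} {B : Finset ℕ}
    (hB : B = (Finset.range q).image fun i => (a + i * d) % p) {y : ℕ} :
    y ∈ B ↔ ∃ i < q, (a + i * d) % p = y := by
  subst hB; simp [Finset.mem_image]

lemma gapAt_le {p : ℕ} {B : Finset ℕ} {x s : ℕ} (hs : 0 < s)
    (hmem : (x + s) % p ∈ B) : gapAt p B x ≤ s := Nat.sInf_le ⟨hs, hmem⟩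

lemma gapAt_spec {p : ℕ} {B : Finset ℕ} {x : ℕ} (hp : 0 < p) (hx : x ∈ B)
    (hxlt : x < p) : 0 < gapAt p B x ∧ (x + gapAt p B x) % p ∈ B := by
  have hmem : p ∈ {t : ℕ | 0 < t ∧ (x + t) % p ∈ B} := by
    refine ⟨hp, ?_⟩
    rw [Nat.add_mod_right, Nat.mod_eq_of_lt hxlt]; exact hx
  exact Nat.sInf_mem ⟨p, hmem⟩

lemma gapAt_le_p {p : ℕ} {B : Finset ℕ} {x : ℕ} (hp : 0 < p) (hx : x ∈ B)
    (hxlt : x < p) : gapAt p B x ≤ p := by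
  refine gapAt_le hp ?_
  rw [Nat.add_mod_right, Nat.mod_eq_of_lt hxlt]; exact hx


lemma x_add_dl {p q d a : ℕ} {B : Finset ℕ} (hp : 0 < p)
    (hB : B = (Finset.range q).image fun i => (a + i * d) % p)
    {i j : ℕ} (hj : j < q) :
    ((a + i * d) % p + dl p d i j) % p ∈ B := by
  have h1 : (a + i * d) % p + dl p d i j ≡ a + j * d [MOD p] :=
    (Nat.ModEq.add_right _ (Nat.mod_modEq _ _)).trans (dl_modeq' hp d a i j)
  have h2 : ((a + i * d) % p + dl p d i j) % p = (a + j * d) % p := h1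
  rw [h2]
  exact (mem_B_iff hB).2 ⟨j, hj, rfl⟩

lemma gap_le_dl {p q d a : ℕ} {B : Finset ℕ} (hp : 0 < p) (hqp : q < p)
    (hd : Nat.gcd p d = 1)
    (hB : B = (Finset.range q).image fun i => (a + i * d) % p)
    {i j : ℕ} (hi : i < q) (hj : j < q) (hne : j ≠ i) :
    gapAt p B ((a + i * d) % p) ≤ dl p d i j := by
  have hdl0 : dl p d i j ≠ 0 := by
    intro h0
    exact hne ((dl_eq_zero_iff hp hd (by omega) (by omega)).1 h0).symm
  exact gapAt_le (Nat.pos_of_ne_zero hdl0) (x_add_dl hp hB hj)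

lemma gap_eq_dl {p q d a : ℕ} {B : Finset ℕ} (hp : 0 < p) (hqp : q < p)
    (hq2 : 2 ≤ q) (hd : Nat.gcd p d = 1)
    (hB : B = (Finset.range q).image fun i => (a + i * d) % p)
    {i : ℕ} (hi : i < q) :
    ∃ j, j < q ∧ j ≠ i ∧ gapAt p B ((a + i * d) % p) = dl p d i j := by
  set x := (a + i * d) % p with hx
  have hxB : x ∈ B := (mem_B_iff hB).2 ⟨i, hi, rfl⟩
  have hxlt : x < p := Nat.mod_lt _ hp
  obtain ⟨hgpos, hgmem⟩ := gapAt_spec hp hxB hxlt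
  set g := gapAt p B x with hgdef
  obtain ⟨j, hj, hje⟩ := (mem_B_iff hB).1 hgmem
  have h1 : x + g ≡ a + j * d [MOD p] := hje.symm
  have h2 : x + g ≡ x + dl p d i j [MOD p] := by
    have h3 : a + i * d + dl p d i j ≡ a + j * d [MOD p] := dl_modeq' hp d a i j
    have h4 : x + dl p d i j ≡ a + j * d [MOD p] :=
      (Nat.ModEq.add_right _ (Nat.mod_modEq _ _)).trans h3
    exact h1.trans h4.symm
  have hgdl : g ≡ dl p d i j [MOD p] := Nat.ModEq.add_left_cancel' x h2
  by_cases hji : j = i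
  · -- then dl i j = 0, g ≡ 0, so p ∣ g, 0 < g ≤ p → g = p; contradiction with another point
    exfalso
    subst hji
    have hz : dl p d j j = 0 := (dl_eq_zero_iff hp hd (by omega) (by omega)).2 rfl
    rw [hz] at hgdl
    have hdvd : p ∣ g := (Nat.modEq_zero_iff_dvd).1 hgdl
    have hgle : g ≤ p := gapAt_le_p hp hxB hxlt
    have hgp : g = p := le_antisymm hgle (Nat.le_of_dvd hgpos hdvd)
    -- pick another index
    obtain ⟨j', hj'q, hj'ne⟩ : ∃ j', j' < q ∧ j' ≠ j := by
      rcases eq_or_ne j 0 with h | h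
      · exact ⟨1, by omega, by omega⟩
      · exact ⟨0, by omega, Ne.symm h⟩
    have hA1 := gap_le_dl hp hqp hd hB hi hj'q hj'ne
    rw [← hx] at hA1
    have hA2 := dl_lt hp d j j'
    omega
  · refine ⟨j, hj, hji, ?_⟩
    have hgle : g ≤ dl p d i j := gap_le_dl hp hqp hd hB hi hj hji
    exact eq_of_modeq_lt hgdl (lt_of_le_of_lt hgle (dl_lt hp d i j)) (dl_lt hp d i j)

lemma dl_zero_modeq {p : ℕ} (hp : 0 < p) (d t : ℕ) :
    dl p d 0 t ≡ t * d [MOD p] := by simpa using dl_modeq hp d 0 t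

lemma dl_zero'_modeq {p : ℕ} (hp : 0 < p) (d t : ℕ) :
    t * d + dl p d t 0 ≡ 0 [MOD p] := by simpa using dl_modeq hp d t 0

lemma dl_shift {p : ℕ} (hp : 0 < p) (d i t : ℕ) :
    dl p d i (i + t) = dl p d 0 t := by
  have h1 : i * d + dl p d i (i + t) ≡ i * d + t * d [MOD p] := by
    have := dl_modeq hp d i (i + t)
    calc i * d + dl p d i (i + t) ≡ (i + t) * d [MOD p] := this
      _ = i * d + t * d := by ring
  have h2 : i * d + dl p d 0 t ≡ i * d + t * d [MOD p] :=
    Nat.ModEq.add_left _ (dl_zero_modeq hp d t)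
  have h3 : dl p d i (i + t) ≡ dl p d 0 t [MOD p] :=
    Nat.ModEq.add_left_cancel' _ (h1.trans h2.symm)
  exact eq_of_modeq_lt h3 (dl_lt hp d _ _) (dl_lt hp d _ _)

lemma dl_shift' {p : ℕ} (hp : 0 < p) (d j t : ℕ) :
    dl p d (j + t) j = dl p d t 0 := by
  have h1 : (j + t) * d + dl p d (j + t) j ≡ j * d [MOD p] := dl_modeq hp d _ _
  have h2 : (j + t) * d + dl p d t 0 ≡ j * d [MOD p] := by
    calc (j + t) * d + dl p d t 0 = j * d + (t * d + dl p d t 0) := by ring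
      _ ≡ j * d + 0 [MOD p] := Nat.ModEq.add_left _ (dl_zero'_modeq hp d t)
      _ = j * d := by ring
  have h3 : dl p d (j + t) j ≡ dl p d t 0 [MOD p] :=
    Nat.ModEq.add_left_cancel' _ (h1.trans h2.symm)
  exact eq_of_modeq_lt h3 (dl_lt hp d _ _) (dl_lt hp d _ _)

lemma dl0_inj {p d : ℕ} (hp : 0 < p) (hd : Nat.gcd p d = 1) {s t : ℕ}
    (hs : s < p) (ht : t < p) (h : dl p d 0 s = dl p d 0 t) : s = t := by
  have h1 : s * d ≡ t * d [MOD p] :=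
    (dl_zero_modeq hp d s).symm.trans (h ▸ dl_zero_modeq hp d t)
  exact eq_of_modeq_lt (Nat.ModEq.cancel_right_of_coprime hd h1) hs ht

lemma dl0'_inj {p d : ℕ} (hp : 0 < p) (hd : Nat.gcd p d = 1) {s t : ℕ}
    (hs : s < p) (ht : t < p) (h : dl p d s 0 = dl p d t 0) : s = t := by
  have h1 := (dl_zero'_modeq hp d s).trans (dl_zero'_modeq hp d t).symm
  rw [h] at h1
  have h2 : s * d ≡ t * d [MOD p] := Nat.ModEq.add_right_cancel' _ h1
  exact eq_of_modeq_lt (Nat.ModEq.cancel_right_of_coprime hd h2) hs ht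

lemma structure_lemma {p q d a : ℕ} {B : Finset ℕ} (hp : 0 < p) (hq : 3 ≤ q)
    (hqp : q < p) (hd : Nat.gcd p d = 1)
    (hB : B = (Finset.range q).image fun i => (a + i * d) % p) :
    ∃ A Bv : ℕ, 0 < A ∧ 0 < Bv ∧
      ∀ x ∈ B, gapAt p B x = A ∨ gapAt p B x = Bv ∨ gapAt p B x = A + Bv := by
  have hTne : (Finset.Icc 1 (q - 1)).Nonempty := ⟨1, Finset.mem_Icc.2 (by omega)⟩
  obtain ⟨u, huT, huA⟩ := Finset.exists_mem_eq_inf' hTne (fun t => dl p d 0 t)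
  obtain ⟨v, hvT, hvB⟩ := Finset.exists_mem_eq_inf' hTne (fun t => dl p d t 0)
  set A := (Finset.Icc 1 (q - 1)).inf' hTne (fun t => dl p d 0 t) with hAdef
  set Bv := (Finset.Icc 1 (q - 1)).inf' hTne (fun t => dl p d t 0) with hBvdef
  obtain ⟨hu1, huq⟩ := Finset.mem_Icc.1 huT
  obtain ⟨hv1, hvq⟩ := Finset.mem_Icc.1 hvT
  have hAle : ∀ t, 1 ≤ t → t ≤ q - 1 → A ≤ dl p d 0 t := fun t h1 h2 =>
    Finset.inf'_le _ (Finset.mem_Icc.2 ⟨h1, h2⟩)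
  have hBle : ∀ t, 1 ≤ t → t ≤ q - 1 → Bv ≤ dl p d t 0 := fun t h1 h2 =>
    Finset.inf'_le _ (Finset.mem_Icc.2 ⟨h1, h2⟩)
  have hApos : 0 < A := by
    rw [huA]
    rcases Nat.eq_zero_or_pos (dl p d 0 u) with h | h
    · exact absurd ((dl_eq_zero_iff hp hd hp (by omega)).1 h) (by omega)
    · exact h
  have hBvpos : 0 < Bv := by
    rw [hvB]
    rcases Nat.eq_zero_or_pos (dl p d v 0) with h | h
    · exact absurd ((dl_eq_zero_iff hp hd (by omega) hp).1 h) (by omega)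
    · exact h
  have hAlt : A < p := huA ▸ dl_lt hp d 0 u
  have hBvlt : Bv < p := hvB ▸ dl_lt hp d v 0
  -- S1
  have hS1 : ∀ t, 1 ≤ t → t < u → A + Bv ≤ dl p d 0 t := by
    intro t h1 h2
    have hAt : A ≤ dl p d 0 t := hAle t h1 (by omega)
    have hne : dl p d 0 t ≠ A := by
      rw [huA]
      intro h
      exact absurd (dl0_inj hp hd (by omega) (by omega) h) (by omega)
    set s := u - t with hs
    have hu : u = t + s := by omega
    have k1 : A ≡ t * d + s * d [MOD p] := by
      rw [huA, hu]
      calc dl p d 0 (t + s) ≡ (t + s) * d [MOD p] := dl_zero_modeq hp d _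
        _ = t * d + s * d := by ring
    have k2 : A + dl p d s 0 ≡ dl p d 0 t [MOD p] := by
      calc A + dl p d s 0 ≡ (t * d + s * d) + dl p d s 0 [MOD p] :=
            Nat.ModEq.add_right _ k1
        _ = t * d + (s * d + dl p d s 0) := by ring
        _ ≡ t * d + 0 [MOD p] := Nat.ModEq.add_left _ (dl_zero'_modeq hp d s)
        _ = t * d := by ring
        _ ≡ dl p d 0 t [MOD p] := (dl_zero_modeq hp d t).symm
    have k3 : (A + dl p d s 0) % p = dl p d 0 t := by
      have k4 : (A + dl p d s 0) % p = dl p d 0 t % p := k2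
      rwa [Nat.mod_eq_of_lt (dl_lt hp d 0 t)] at k4
    have hBs : Bv ≤ dl p d s 0 := hBle s (by omega) (by omega)
    have hdslt : dl p d s 0 < p := dl_lt hp d s 0
    rcases lt_or_ge (A + dl p d s 0) p with hcase | hcase
    · rw [Nat.mod_eq_of_lt hcase] at k3; omega
    · exfalso
      rw [Nat.mod_eq_sub_mod hcase, Nat.mod_eq_of_lt (by omega)] at k3
      omega
  -- S2
  have hS2 : ∀ t, 1 ≤ t → t < v → A + Bv ≤ dl p d t 0 := by
    intro t h1 h2
    have hBt : Bv ≤ dl p d t 0 := hBle t h1 (by omega)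
    have hne : dl p d t 0 ≠ Bv := by
      rw [hvB]
      intro h
      exact absurd (dl0'_inj hp hd (by omega) (by omega) h) (by omega)
    set s := v - t with hs
    have hv : v = t + s := by omega
    have k1 : t * d + s * d + Bv ≡ 0 [MOD p] := by
      rw [hvB, hv]
      calc t * d + s * d + dl p d (t + s) 0 = (t + s) * d + dl p d (t + s) 0 := by
            ring
        _ ≡ 0 [MOD p] := dl_zero'_modeq hp d (t + s)
    have k2 : dl p d 0 s + Bv ≡ dl p d t 0 [MOD p] := by
      have m1 : t * d + (dl p d 0 s + Bv) ≡ t * d + dl p d t 0 [MOD p] := by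
        calc t * d + (dl p d 0 s + Bv) = (dl p d 0 s) + (t * d + Bv) := by ring
          _ ≡ s * d + (t * d + Bv) [MOD p] :=
              Nat.ModEq.add_right _ (dl_zero_modeq hp d s)
          _ = t * d + s * d + Bv := by ring
          _ ≡ 0 [MOD p] := k1
          _ ≡ t * d + dl p d t 0 [MOD p] := (dl_zero'_modeq hp d t).symm
      exact Nat.ModEq.add_left_cancel' _ m1
    have k3 : (dl p d 0 s + Bv) % p = dl p d t 0 := by
      have k4 : (dl p d 0 s + Bv) % p = dl p d t 0 % p := k2
      rwa [Nat.mod_eq_of_lt (dl_lt hp d t 0)] at k4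
    have hAs : A ≤ dl p d 0 s := hAle s (by omega) (by omega)
    have hdslt : dl p d 0 s < p := dl_lt hp d 0 s
    rcases lt_or_ge (dl p d 0 s + Bv) p with hcase | hcase
    · rw [Nat.mod_eq_of_lt hcase] at k3; omega
    · exfalso
      rw [Nat.mod_eq_sub_mod hcase, Nat.mod_eq_of_lt (by omega)] at k3
      omega
  -- A + Bv < p
  have hsum_p : ∀ t, 1 ≤ t → t ≤ q - 1 → dl p d 0 t + dl p d t 0 = p := by
    intro t h1 h2
    have k : dl p d 0 t + dl p d t 0 ≡ 0 [MOD p] := by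
      calc dl p d 0 t + dl p d t 0 ≡ t * d + dl p d t 0 [MOD p] :=
            Nat.ModEq.add_right _ (dl_zero_modeq hp d t)
        _ ≡ 0 [MOD p] := dl_zero'_modeq hp d t
    have hdvd : p ∣ dl p d 0 t + dl p d t 0 := (Nat.modEq_zero_iff_dvd).1 k
    have l1 : dl p d 0 t < p := dl_lt hp d 0 t
    have l2 : dl p d t 0 < p := dl_lt hp d t 0
    have l3 : dl p d 0 t ≠ 0 := fun h =>
      absurd ((dl_eq_zero_iff hp hd hp (by omega)).1 h) (by omega)
    have l4 := Nat.le_of_dvd (by omega) hdvd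
    have l5 : p ∣ dl p d 0 t + dl p d t 0 - p := Nat.dvd_sub hdvd dvd_rfl
    rcases Nat.eq_zero_or_pos (dl p d 0 t + dl p d t 0 - p) with h | h
    · omega
    · exact absurd (Nat.le_of_dvd h l5) (by omega)
  have hABlt : A + Bv < p := by
    obtain ⟨t0, ht01, ht0q, ht0u⟩ : ∃ t0, 1 ≤ t0 ∧ t0 ≤ q - 1 ∧ t0 ≠ u := by
      rcases eq_or_ne u 1 with h | h
      · exact ⟨2, by omega, by omega, by omega⟩
      · exact ⟨1, by omega, by omega, Ne.symm h⟩
    have h1 : A ≤ dl p d 0 t0 := hAle t0 ht01 ht0q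
    have h2 : dl p d 0 t0 ≠ A := by
      rw [huA]
      intro h
      exact absurd (dl0_inj hp hd (by omega) (by omega) h) ht0u
    have h3 : Bv ≤ dl p d t0 0 := hBle t0 ht01 ht0q
    have h4 := hsum_p t0 ht01 ht0q
    omega
  have huv : u ≠ v := by
    intro h
    have := hsum_p u hu1 huq
    rw [← h] at hvB
    omega
  refine ⟨A, Bv, hApos, hBvpos, ?_⟩
  intro x hx
  obtain ⟨i, hi, rfl⟩ := (mem_B_iff hB).1 hx
  obtain ⟨j0, hj0q, hj0i, hg⟩ := gap_eq_dl hp hqp (by omega) hd hB hi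
  set g := gapAt p B ((a + i * d) % p) with hgdef
  have hcap_A : i + u ≤ q - 1 → g ≤ A := by
    intro hiu
    have h := gap_le_dl hp hqp hd hB hi (j := i + u) (by omega) (by omega)
    rwa [dl_shift hp d i u, ← huA] at h
  have hcap_B : v ≤ i → g ≤ Bv := by
    intro hvi
    have h := gap_le_dl hp hqp hd hB hi (j := i - v) (by omega) (by omega)
    have h2 := dl_shift' hp d (i - v) v
    rw [show i - v + v = i from by omega] at h2
    rwa [h2, ← hvB] at h
  have hcap_AB : i < v → q ≤ i + u → g ≤ A + Bv := by
    intro hiv hiu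
    rcases Nat.lt_or_ge u v with huv' | huv'
    · -- u < v
      set s := v - u with hsdef
      have hv : v = u + s := by omega
      have e2 : dl p d s 0 = A + Bv := by
        have k1 : u * d + s * d + Bv ≡ 0 [MOD p] := by
          rw [hvB, hv]
          calc u * d + s * d + dl p d (u + s) 0
              = (u + s) * d + dl p d (u + s) 0 := by ring
            _ ≡ 0 [MOD p] := dl_zero'_modeq hp d (u + s)
        have k2 : dl p d s 0 ≡ A + Bv [MOD p] := by
          calc dl p d s 0 = 0 + dl p d s 0 := by ring
            _ ≡ (u * d + s * d + Bv) + dl p d s 0 [MOD p] :=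
                (Nat.ModEq.add_right _ k1).symm
            _ = (u * d) + Bv + (s * d + dl p d s 0) := by ring
            _ ≡ (u * d) + Bv + 0 [MOD p] :=
                Nat.ModEq.add_left _ (dl_zero'_modeq hp d s)
            _ = u * d + Bv := by ring
            _ ≡ dl p d 0 u + Bv [MOD p] :=
                Nat.ModEq.add_right _ (dl_zero_modeq hp d u).symm
            _ = A + Bv := by rw [← huA]
        exact eq_of_modeq_lt k2 (dl_lt hp d s 0) hABlt
      have h := gap_le_dl hp hqp hd hB hi (j := i - s) (by omega) (by omega)
      have h2 := dl_shift' hp d (i - s) s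
      rw [show i - s + s = i from by omega] at h2
      rwa [h2, e2] at h
    · -- v < u
      have huv'' : v < u := by omega
      set s := u - v with hsdef
      have hu : u = v + s := by omega
      have e1 : dl p d 0 s = A + Bv := by
        have k1 : A ≡ v * d + s * d [MOD p] := by
          rw [huA, hu]
          calc dl p d 0 (v + s) ≡ (v + s) * d [MOD p] := dl_zero_modeq hp d _
            _ = v * d + s * d := by ring
        have k2 : A + Bv ≡ dl p d 0 s [MOD p] := by
          calc A + Bv ≡ (v * d + s * d) + Bv [MOD p] := Nat.ModEq.add_right _ k1
            _ = (v * d + Bv) + s * d := by ring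
            _ ≡ (v * d + dl p d v 0) + s * d [MOD p] := by rw [← hvB]
            _ ≡ 0 + s * d [MOD p] := Nat.ModEq.add_right _ (dl_zero'_modeq hp d v)
            _ = s * d := by ring
            _ ≡ dl p d 0 s [MOD p] := (dl_zero_modeq hp d s).symm
        exact (eq_of_modeq_lt k2 hABlt (dl_lt hp d 0 s)).symm
      have h := gap_le_dl hp hqp hd hB hi (j := i + s) (by omega) (by omega)
      rwa [dl_shift hp d i s, e1] at h
  rcases Nat.lt_or_ge i j0 with hij | hij
  · -- i < j0
    obtain ⟨t, rfl⟩ : ∃ t, j0 = i + t := ⟨j0 - i, by omega⟩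
    have ht1 : 1 ≤ t := by omega
    rw [dl_shift hp d i t] at hg
    by_cases hiu : i + u ≤ q - 1
    · left
      have h5 := hcap_A hiu
      have h6 : A ≤ dl p d 0 t := hAle t ht1 (by omega)
      omega
    · have htu : t < u := by omega
      have h7 : A + Bv ≤ g := hg ▸ hS1 t ht1 htu
      by_cases hvi : v ≤ i
      · exfalso
        have h8 := hcap_B hvi
        omega
      · right; right
        have h8 := hcap_AB (by omega) (by omega)
        omega
  · -- j0 < i
    have hij' : j0 < i := by omega
    obtain ⟨t, rfl⟩ : ∃ t, i = j0 + t := ⟨i - j0, by omega⟩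
    have ht1 : 1 ≤ t := by omega
    rw [dl_shift' hp d j0 t] at hg
    by_cases hvi : v ≤ j0 + t
    · right; left
      have h5 := hcap_B hvi
      have h6 : Bv ≤ dl p d t 0 := hBle t ht1 (by omega)
      omega
    · have htv : t < v := by omega
      have h7 : A + Bv ≤ g := hg ▸ hS2 t ht1 htv
      by_cases hiu : j0 + t + u ≤ q - 1
      · exfalso
        have h8 := hcap_A hiu
        omega
      · right; right
        have h8 := hcap_AB (by omega) (by omega)
        omega

lemma card_B {p q d a : ℕ} {B : Finset ℕ} (hp : 0 < p) (hqp : q < p)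
    (hd : Nat.gcd p d = 1)
    (hB : B = (Finset.range q).image fun i => (a + i * d) % p) :
    B.card = q := by
  subst hB
  rw [Finset.card_image_of_injOn, Finset.card_range]
  intro i hi j hj hij
  simp only [Finset.coe_range, Set.mem_Iio] at hi hj
  have h1 : a + i * d ≡ a + j * d [MOD p] := hij
  have h2 : i * d ≡ j * d [MOD p] := Nat.ModEq.add_left_cancel' a h1
  have h3 : i ≡ j [MOD p] := Nat.ModEq.cancel_right_of_coprime hd h2
  exact eq_of_modeq_lt h3 (by omega) (by omega)

lemma B_lt {p q d a : ℕ} {B : Finset ℕ} (hp : 0 < p)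
    (hB : B = (Finset.range q).image fun i => (a + i * d) % p) :
    ∀ x ∈ B, x < p := by
  intro x hx
  obtain ⟨i, _, rfl⟩ := (mem_B_iff hB).1 hx
  exact Nat.mod_lt _ hp

lemma sum_gap_le {p : ℕ} {B : Finset ℕ} (hp : 0 < p) (hlt : ∀ x ∈ B, x < p) :
    (∑ x ∈ B, gapAt p B x) ≤ p := by
  classical
  set I : ℕ → Finset ℕ :=
    fun x => (Finset.range (gapAt p B x)).image (fun s => (x + s) % p) with hI
  have hcard : ∀ x ∈ B, (I x).card = gapAt p B x := by
    intro x hx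
    rw [Finset.card_image_of_injOn, Finset.card_range]
    intro s hs s' hs' hss
    simp only [Finset.coe_range, Set.mem_Iio] at hs hs'
    have hgp : gapAt p B x ≤ p := gapAt_le_p hp hx (hlt x hx)
    have h1 : x + s ≡ x + s' [MOD p] := hss
    have h2 : s ≡ s' [MOD p] := Nat.ModEq.add_left_cancel' x h1
    exact eq_of_modeq_lt h2 (by omega) (by omega)
  have key : ∀ x ∈ B, ∀ y ∈ B, ∀ s s', s ≤ s' → s < gapAt p B x →
      s' < gapAt p B y → (x + s) % p = (y + s') % p → x = y := by
    intro x hx y hy s s' hle hs hs' heq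
    by_contra hne
    have h3 : y + (s' - s) ≡ x [MOD p] := by
      have h4 : y + (s' - s) + s ≡ x + s [MOD p] := by
        rw [show y + (s' - s) + s = y + s' from by omega]
        exact (heq.symm : y + s' ≡ x + s [MOD p])
      exact Nat.ModEq.add_right_cancel' s h4
    rcases Nat.eq_zero_or_pos (s' - s) with h0 | h0
    · have : y = x := by
        have h5 : y ≡ x [MOD p] := by simpa [h0] using h3
        exact eq_of_modeq_lt h5 (hlt y hy) (hlt x hx)
      exact hne this.symm
    · have hxm : (y + (s' - s)) % p = x := by
        have h5 : (y + (s' - s)) % p = x % p := h3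
        rwa [Nat.mod_eq_of_lt (hlt x hx)] at h5
      have h6 : gapAt p B y ≤ s' - s := gapAt_le h0 (by rw [hxm]; exact hx)
      omega
  have hdisj : ∀ x ∈ B, ∀ y ∈ B, x ≠ y → Disjoint (I x) (I y) := by
    intro x hx y hy hxy
    rw [Finset.disjoint_left]
    rintro z hz1 hz2
    simp only [hI, Finset.mem_image, Finset.mem_range] at hz1 hz2
    obtain ⟨s, hs, rfl⟩ := hz1
    obtain ⟨s', hs', heq⟩ := hz2
    rcases le_total s s' with h | h
    · exact hxy (key x hx y hy s s' h hs hs' heq.symm)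
    · exact hxy ((key y hy x hx s' s h hs' hs heq).symm)
  calc ∑ x ∈ B, gapAt p B x = ∑ x ∈ B, (I x).card :=
        Finset.sum_congr rfl fun x hx => (hcard x hx).symm
    _ = (B.biUnion I).card := (Finset.card_biUnion hdisj).symm
    _ ≤ (Finset.range p).card := by
        apply Finset.card_le_card
        intro z hz
        simp only [hI, Finset.mem_biUnion, Finset.mem_image, Finset.mem_range] at hz
        obtain ⟨x, _, s, _, rfl⟩ := hz
        simp only [Finset.mem_range]
        exact Nat.mod_lt _ hp
    _ = p := Finset.card_range p

lemma arith_c {q1 q2 q3 q4 p : ℤ} (hp : p = q1 + q2 + q3 + q4)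
    (c1 : q3 + 1 ≤ q2) (c2 : q4 + 2 ≤ q2) (c3 : 3 ≤ q2) (c4 : q2 + 1 ≤ q1)
    (h3 : q2 * (q1 + 1) ≤ p) : False := by
  nlinarith [mul_nonneg (by linarith : (0:ℤ) ≤ q1 - 2) (by linarith : (0:ℤ) ≤ q2 - 1)]

lemma arith_k {q1 q2 q3 q4 p c G k : ℤ} (hp : p = q1 + q2 + q3 + q4)
    (c1 : q3 + 1 ≤ q2) (c2 : q4 + 2 ≤ q2) (c3 : 3 ≤ q2) (c4 : q2 + 1 ≤ q1)
    (c5 : q1 + 1 ≤ G) (c6 : 3 ≤ k) (c7 : k ≤ q2) (hcc : c = 1 ∨ c = 2)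
    (hZ : (q2 - k) * c + ((k - 1) * (G - c) + G) ≤ p) : False := by
  have e1 : (0:ℤ) ≤ (k - 1) * (G - q2 - 2) :=
    mul_nonneg (by linarith) (by linarith)
  rcases hcc with rfl | rfl
  · nlinarith [e1, mul_nonneg (by linarith : (0:ℤ) ≤ k - 3) (by linarith : (0:ℤ) ≤ q2)]
  · nlinarith [e1, mul_nonneg (by linarith : (0:ℤ) ≤ k - 3) (by linarith : (0:ℤ) ≤ q2 - 3)]

end TGProof

/-- Let `q₁ ≥ q₂ + 1 ≥ q₃ + 2 ≥ q₄ + 3 ≥ 4` be positive integers and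
`p = q₁ + q₂ + q₃ + q₄`.  If `B` is a TG-sequence with `q₂` points and modulus
`p` (generated by `d` with `gcd(p, d) = 1`) whose largest gap size `G`
satisfies `G ≥ q₁ + 1`, with smallest gap size `c` and `k` larger gaps, then
`c ∈ {1, 2}` and `k ∈ {1, 2}`. -/
theorem small_gap_and_larger_gap_count (q1 q2 q3 q4 : ℕ)
    (hq1 : 0 < q1) (hq2 : 0 < q2) (hq3 : 0 < q3) (hq4 : 0 < q4)
    (h12 : q2 + 1 ≤ q1) (h23 : q3 + 2 ≤ q2 + 1) (h34 : q4 + 3 ≤ q3 + 2)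
    (h4 : 4 ≤ q4 + 3)
    (p : ℕ) (hp : p = q1 + q2 + q3 + q4)
    (d a : ℕ) (hd : Nat.gcd p d = 1)
    (B : Finset ℕ) (hB : B = (Finset.range q2).image (fun i => (a + i * d) % p))
    (c G k : ℕ)
    (hc : c ∈ gapSizes p B) (hcmin : ∀ g ∈ gapSizes p B, c ≤ g)
    (hG : G ∈ gapSizes p B) (hGmax : ∀ g ∈ gapSizes p B, g ≤ G)
    (hGq1 : q1 + 1 ≤ G)
    (hk : k = (B.filter (fun x => c < gapAt p B x)).card) :
    (c = 1 ∨ c = 2) ∧ (k = 1 ∨ k = 2) := by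

  have hp0 : 0 < p := by omega
  have hq2p : q2 < p := by omega
  have hq23 : 3 ≤ q2 := by omega
  have hlt := TGProof.B_lt hp0 hB
  have hcardB : B.card = q2 := TGProof.card_B hp0 hq2p hd hB
  have hsum : (∑ x ∈ B, gapAt p B x) ≤ p := TGProof.sum_gap_le hp0 hlt
  obtain ⟨xG, hxG, hxGg⟩ : ∃ x ∈ B, gapAt p B x = G := by
    simpa [gapSizes, Finset.mem_image] using hG
  obtain ⟨xc, hxc, hxcg⟩ : ∃ x ∈ B, gapAt p B x = c := by
    simpa [gapSizes, Finset.mem_image] using hc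
  have hgap_mem : ∀ x ∈ B, gapAt p B x ∈ gapSizes p B := fun x hx =>
    Finset.mem_image_of_mem _ hx
  have hge_c : ∀ x ∈ B, c ≤ gapAt p B x := fun x hx => hcmin _ (hgap_mem x hx)
  have hc1 : 1 ≤ c := by
    have := (TGProof.gapAt_spec hp0 hxc (hlt xc hxc)).1
    omega
  have hcG : c ≤ G := hGmax c hc
  have hsum0 : q2 * c ≤ p := by
    have h1 : B.card • c ≤ ∑ x ∈ B, gapAt p B x :=
      Finset.card_nsmul_le_sum _ _ _ (fun x hx => hge_c x hx)
    rw [hcardB, smul_eq_mul] at h1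
    exact le_trans h1 hsum
  have hsum1 : (q2 - 1) * c + G ≤ p := by
    have h2 := Finset.add_sum_erase B (fun x => gapAt p B x) hxG
    have h1 := Finset.card_nsmul_le_sum (B.erase xG) (fun x => gapAt p B x) c
      (fun x hx => hge_c x (Finset.mem_of_mem_erase hx))
    rw [Finset.card_erase_of_mem hxG, hcardB, smul_eq_mul] at h1
    beta_reduce at h1 h2
    generalize (q2 - 1) * c = M at h1 ⊢
    omega
  have hc2 : c ≤ 2 := by
    by_contra hc3
    have h3 : (q2 - 1) * 3 ≤ (q2 - 1) * c := Nat.mul_le_mul_left _ (by omega)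
    generalize (q2 - 1) * c = M at hsum1 h3
    omega
  have hcltG : c < G := by
    rcases Nat.lt_or_ge c G with h | h
    · exact h
    · exfalso
      have h1 : q1 + 1 ≤ c := le_trans hGq1 h
      have h2 : q2 * (q1 + 1) ≤ q2 * c := Nat.mul_le_mul_left _ h1
      have h3 : q2 * (q1 + 1) ≤ p := le_trans h2 hsum0
      exact @TGProof.arith_c (q1:ℤ) (q2:ℤ) (q3:ℤ) (q4:ℤ) (p:ℤ)
        (by exact_mod_cast hp) (by omega) (by omega)
        (by omega) (by omega) (by exact_mod_cast h3)
  have hxGL : xG ∈ B.filter (fun x => c < gapAt p B x) := Finset.mem_filter.2 ⟨hxG, by rw [hxGg]; exact hcltG⟩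
  have hk1 : 1 ≤ k := by
    rw [hk]
    exact Finset.card_pos.2 ⟨xG, hxGL⟩
  have hkq2 : k ≤ q2 := by
    rw [hk, ← hcardB]
    exact Finset.card_filter_le _ _
  obtain ⟨A, Bv, hApos, hBvpos, hclass⟩ :=
    TGProof.structure_lemma hp0 hq23 hq2p hd hB
  have hbig : ∀ x ∈ B, c < gapAt p B x → G ≤ gapAt p B x + c := by
    intro x hx hcx
    have hgx := hclass x hx
    have hcc := hclass xc hxc
    rw [hxcg] at hcc
    have hGG := hclass xG hxG
    rw [hxGg] at hGG
    have hgec := hge_c x hx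
    rcases hgx with h | h | h <;> rcases hcc with h' | h' | h' <;>
      rcases hGG with h'' | h'' | h'' <;> omega
  have hsum2 : (q2 - k) * c + ((k - 1) * (G - c) + G) ≤ p := by
    have hsplit := Finset.sum_filter_add_sum_filter_not B
      (fun x => c < gapAt p B x) (fun x => gapAt p B x)
    have hcardNL : (B.filter (fun x => ¬ c < gapAt p B x)).card = q2 - k := by
      have hfc := Finset.card_filter_add_card_filter_not
        (s := B) (p := fun x => c < gapAt p B x)
      omega
    have h1 : (q2 - k) * c ≤
        ∑ x ∈ B.filter (fun x => ¬ c < gapAt p B x), gapAt p B x := by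
      have hh := Finset.card_nsmul_le_sum
        (B.filter (fun x => ¬ c < gapAt p B x)) (fun x => gapAt p B x) c
        (fun x hx => hge_c x (Finset.mem_of_mem_filter x hx))
      rwa [hcardNL, smul_eq_mul] at hh
    have h2 := Finset.add_sum_erase (B.filter (fun x => c < gapAt p B x)) (fun x => gapAt p B x) hxGL
    have h3 : (k - 1) * (G - c) ≤ ∑ x ∈ (B.filter (fun x => c < gapAt p B x)).erase xG, gapAt p B x := by
      have hbd : ∀ x ∈ (B.filter (fun x => c < gapAt p B x)).erase xG, G - c ≤ gapAt p B x := by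
        intro x hx
        have hxL := Finset.mem_of_mem_erase hx
        obtain ⟨hxB, hcx⟩ := Finset.mem_filter.1 hxL
        have := hbig x hxB hcx
        omega
      have hh := Finset.card_nsmul_le_sum ((B.filter (fun x => c < gapAt p B x)).erase xG) (fun x => gapAt p B x) (G - c) hbd
      rwa [Finset.card_erase_of_mem hxGL, ← hk, smul_eq_mul] at hh
    beta_reduce at hsplit h1 h2 h3
    generalize (q2 - k) * c = M1 at h1 ⊢
    generalize (k - 1) * (G - c) = M2 at h3 ⊢
    omega
  have hk2 : k ≤ 2 := by
    by_contra hk3'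
    have hk3 : 3 ≤ k := by omega
    have hZ : ((q2:ℤ) - k) * c + (((k:ℤ) - 1) * ((G:ℤ) - c) + G) ≤ (p:ℤ) := by
      zify [hkq2, hcG, hk1] at hsum2
      exact hsum2
    exact @TGProof.arith_k (q1:ℤ) (q2:ℤ) (q3:ℤ) (q4:ℤ) (p:ℤ) (c:ℤ) (G:ℤ) (k:ℤ)
      (by exact_mod_cast hp) (by omega) (by omega)
      (by omega) (by omega) (by omega) (by omega) (by omega) (by omega) hZ
  exact ⟨by omega, by omega⟩
end

section
/- Let p be a positive integer and q1 > q2 > q3 > q4 ≥ 1 be integers with gcd(p, q_i) = 1 for i = 1,2,3,4. If the four rational Beatty sequences S(p/q_i, β_i), i = 1,2,3,4, form a disjoint covering system of the integers, then q1 ≥ q4 + 4. -/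
open Finset

lemma mem_beattySet_div_iff {p : ℤ} {q : ℕ} (hq : 0 < q) {β : ℝ} {m : ℤ} :
    m ∈ beattySet (p / q) β ↔
      ∃ n : ℤ, q * m - p * n ≤ ⌊q * β⌋ ∧ ⌊q * β⌋ < q * m - p * n + q := by
  have hq' : (0 : ℝ) < q := Nat.cast_pos.mpr hq
  refine exists_congr fun n => ?_
  rw [eq_comm, Int.floor_eq_iff, Int.le_floor, Int.floor_lt, div_mul_eq_mul_div,
    ← sub_le_iff_le_add, le_div_iff₀ hq', ← lt_sub_iff_add_lt, div_lt_iff₀ hq']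
  push_cast
  constructor <;> rintro ⟨h₁, h₂⟩ <;> constructor <;> linarith

lemma mem_beattySet_div_iff_exists_zmod {p q : ℕ} (hq : 0 < q) {β : ℝ} {m : ℤ} :
    m ∈ beattySet (p / q) β ↔ ∃ j < q, (q * m : ZMod p) = ⌊q * β⌋ - j := by
  have hmem := mem_beattySet_div_iff (p := p) hq (β := β) (m := m)
  rw [Int.cast_natCast] at hmem
  rw [hmem]
  constructor
  · rintro ⟨n, h₁, h₂⟩
    obtain ⟨j, hj⟩ := Int.eq_ofNat_of_zero_le (a := ⌊q * β⌋ - (q * m - p * n)) (by omega)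
    refine ⟨j, by omega, ?_⟩
    have : ((q * m : ℤ) : ZMod p) = ((⌊q * β⌋ - j : ℤ) : ZMod p) := by
      rw [← hj]; simp
    exact_mod_cast this
  · rintro ⟨j, hj, h⟩
    have : ((q * m : ℤ) : ZMod p) = ((⌊q * β⌋ - j : ℤ) : ZMod p) := by push_cast; exact h
    obtain ⟨n, hn⟩ := (ZMod.intCast_eq_intCast_iff_dvd_sub _ _ _).mp this
    exact ⟨-n, by linarith, by linarith⟩

lemma ZMod.card_image_natCast_range (p q : ℕ) [NeZero p] :
    #((range q).image (Nat.cast : ℕ → ZMod p)) = min q p := by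
  have himage : (range q).image (Nat.cast : ℕ → ZMod p) = (range (min q p)).image Nat.cast := by
    refine Subset.antisymm (fun a ha => ?_)
      (image_subset_image (range_subset_range.mpr (min_le_left q p)))
    obtain ⟨j, hj, rfl⟩ := mem_image.mp ha
    have hjq : j % p < q := (Nat.mod_le j p).trans_lt (mem_range.mp hj)
    exact mem_image.mpr
      ⟨j % p, mem_range.mpr (lt_min hjq (Nat.mod_lt j (NeZero.pos p))), ZMod.natCast_mod j p⟩
  rw [himage, card_image_of_injOn, card_range]
  intro i hi j hj hij
  simp only [coe_range, Set.mem_Iio, lt_min_iff] at hi hj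
  rwa [ZMod.natCast_eq_natCast_iff', Nat.mod_eq_of_lt hi.2, Nat.mod_eq_of_lt hj.2] at hij

lemma exists_finset_zmod_mem_beattySet_div_iff (p q : ℕ) [NeZero p] (hq : 0 < q)
    (hpq : Nat.Coprime p q) (β : ℝ) :
    ∃ T : Finset (ZMod p), (∀ m : ℤ, m ∈ beattySet (p / q) β ↔ (m : ZMod p) ∈ T) ∧
      #T = min q p := by
  let u : (ZMod p)ˣ := ZMod.unitOfCoprime q hpq.symm
  refine ⟨((range q).image Nat.cast).image fun x => ((u⁻¹ : (ZMod p)ˣ) : ZMod p) * (⌊q * β⌋ - x),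
    fun m => ?_, ?_⟩
  · rw [mem_beattySet_div_iff_exists_zmod hq, image_image]
    simp only [mem_image, mem_range, Function.comp_apply, Units.inv_mul_eq_iff_eq_mul, u,
      ZMod.coe_unitOfCoprime]
    exact exists_congr fun j => and_congr_right fun _ => eq_comm
  · have hinj : Function.Injective fun x : ZMod p => ((u⁻¹ : (ZMod p)ˣ) : ZMod p) * (⌊q * β⌋ - x) :=
      (Units.isUnit _).mul_right_injective.comp sub_right_injective
    rw [card_image_of_injective _ hinj, ZMod.card_image_natCast_range]

lemma sum_card_eq_card_of_existsUnique {α ι : Type*} [Fintype α] [Fintype ι] [DecidableEq ι]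
    (T : ι → Finset α) (h : ∀ a, ∃! i, a ∈ T i) : ∑ i, #(T i) = Fintype.card α := by
  choose f hf hfu using h
  have hT : ∀ i, T i = univ.filter (f · = i) := fun i => by
    ext a
    simp only [mem_filter, mem_univ, true_and]
    exact ⟨fun ha => (hfu a i ha).symm, fun h => h ▸ hf a⟩
  simp_rw [hT]
  exact (card_eq_sum_card_fiberwise (by simp)).symm

/-- If the four rational Beatty sequences `S(p/qᵢ, βᵢ)` form a disjoint
covering system of the integers, with `q₁ > q₂ > q₃ > q₄ ≥ 1` and
`gcd(p, qᵢ) = 1`, then `q4 + 4 ≤ q1`. -/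
theorem fraenkel_four_q1_ge_q4_add_four (p q1 q2 q3 q4 : ℕ) (hp : 0 < p)
    (h12 : q2 < q1) (h23 : q3 < q2) (h34 : q4 < q3) (h4 : 1 ≤ q4)
    (hg1 : Nat.gcd p q1 = 1) (hg2 : Nat.gcd p q2 = 1)
    (hg3 : Nat.gcd p q3 = 1) (hg4 : Nat.gcd p q4 = 1)
    (β : Fin 4 → ℝ)
    (hcov : ∀ m : ℤ, ∃! i : Fin 4,
      m ∈ beattySet ((p : ℝ) / ((![q1, q2, q3, q4] i : ℕ) : ℝ)) (β i)) :
    q4 + 4 ≤ q1 := by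
  have : NeZero p := ⟨hp.ne'⟩
  have hq : ∀ i, 0 < ![q1, q2, q3, q4] i ∧ Nat.Coprime p (![q1, q2, q3, q4] i) := by
    simp only [Nat.Coprime, Fin.forall_fin_succ, Matrix.cons_val_zero, Matrix.cons_val_succ,
      Matrix.cons_val_fin_one, forall_const, and_true, hg1, hg2, hg3, hg4]
    omega
  choose T hT hcard using fun i =>
    exists_finset_zmod_mem_beattySet_div_iff p _ (hq i).1 (hq i).2 (β i)
  have hsum : ∑ i, #(T i) = p := by
    refine (sum_card_eq_card_of_existsUnique T fun a => ?_).trans (ZMod.card p)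
    obtain ⟨m, rfl⟩ := ZMod.intCast_surjective a
    simpa only [hT] using hcov m
  simp only [Fin.sum_univ_four, hcard, Matrix.cons_val_zero, Matrix.cons_val_one, Matrix.cons_val]
    at hsum
  have hp_eq : q1 + q2 + q3 + q4 = p := by omega
  by_contra! hlt
  have h2p : 2 ∣ p := ⟨2 * q4 + 3, by omega⟩
  rcases (by omega : 2 ∣ q4 ∨ 2 ∣ q3) with h2 | h2
  · simpa [hg4] using Nat.dvd_gcd h2p h2
  · simpa [hg3] using Nat.dvd_gcd h2p h2
end
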